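/- arXiv:2504.07505 — 8 statements merged into one kernel-verified Lean document; each statement's English description precedes it below -/
import Mathlib

section
/- A permutation w of {1,...,n+1} is a c-singleton (i.e., it satisfies the four pattern-avoidance conditions with respect to the pair (D,U)) if and only if, in one-line notation: for each lower-barred number d ∈ D, either every number in {1,...,d−1} appears after d in w (i.e., w⁻¹(j) > w⁻¹(d) for all 1 ≤ j ≤ d−1) or every number in {d+1,...,n+1} appears after d (i.e., w⁻¹(j) > w⁻¹(d) for all d+1 ≤ j ≤ n+1); and for each upper-barred number u ∈ U, either every number in {1,...,u−1} appears before u (i.e., w⁻¹(j) < w⁻¹(u) for all 1 ≤ j ≤ u−1) or every number in {u+1,...,n+1} appears before u (i.e., w⁻¹(j) < w⁻¹(u) for all u+1 ≤ j ≤ n+1). -/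
/-- `w` is a c-singleton with respect to the lower-barred set `D` and upper-barred set `U`:
`w` contains no pattern 312 or 132 whose '2' is lower-barred, and no pattern 231 or 213
whose '2' is upper-barred. -/
def IsCSingleton (n : ℕ) (D U : Finset ℕ) (w : ℕ → ℕ) : Prop :=
  ∀ i j k : ℕ, 1 ≤ i → i < j → j < k → k ≤ n + 1 →
    ¬(w j < w k ∧ w k < w i ∧ w k ∈ D) ∧
    ¬(w k < w i ∧ w i < w j ∧ w i ∈ U) ∧
    ¬(w i < w k ∧ w k < w j ∧ w k ∈ D) ∧
    ¬(w j < w i ∧ w i < w k ∧ w i ∈ U)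

/-- A permutation `w` of `{1,…,n+1}` is a c-singleton iff for each lower-barred `d ∈ D`
all numbers in `{1,…,d-1}` appear after `d` or all numbers in `{d+1,…,n+1}` appear after `d`,
and for each upper-barred `u ∈ U` all numbers in `{1,…,u-1}` appear before `u` or all numbers
in `{u+1,…,n+1}` appear before `u`. -/
theorem statement0 (n : ℕ) (hn : 1 ≤ n) (D U : Finset ℕ)
    (hD : D ⊆ Finset.Icc 2 n) (hU : U = Finset.Icc 2 n \ D)
    (w : Equiv.Perm ℕ) (hw : ∀ x ∉ Finset.Icc 1 (n + 1), w x = x) :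
    IsCSingleton n D U ⇑w ↔
      ((∀ d ∈ D, (∀ j, 1 ≤ j → j ≤ d - 1 → w.symm d < w.symm j) ∨
                 (∀ j, d + 1 ≤ j → j ≤ n + 1 → w.symm d < w.symm j)) ∧
       (∀ u ∈ U, (∀ j, 1 ≤ j → j ≤ u - 1 → w.symm j < w.symm u) ∨
                 (∀ j, u + 1 ≤ j → j ≤ n + 1 → w.symm j < w.symm u))) := by
  have hfix : ∀ x : ℕ, ¬(1 ≤ x ∧ x ≤ n + 1) → w x = x := fun x hx =>
    hw x (by rw [Finset.mem_Icc]; omega)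
  have happ : ∀ x : ℕ, 1 ≤ x → x ≤ n + 1 → 1 ≤ w x ∧ w x ≤ n + 1 := by
    intro x h1 h2
    by_contra hc
    have h3 : w (w x) = w x := hfix (w x) hc
    have h4 : w x = x := by
      have := congrArg w.symm h3
      simpa using this
    omega
  have hsymmapp : ∀ x : ℕ, 1 ≤ x → x ≤ n + 1 → 1 ≤ w.symm x ∧ w.symm x ≤ n + 1 := by
    intro x h1 h2
    by_contra hc
    have h3 : w (w.symm x) = w.symm x := hfix (w.symm x) hc
    rw [Equiv.apply_symm_apply] at h3
    omega
  constructor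
  · intro h
    constructor
    · intro d hd
      have hd2 := Finset.mem_Icc.mp (hD hd)
      by_contra hc
      push_neg at hc
      obtain ⟨⟨a, ha1, ha2, ha3⟩, ⟨b, hb1, hb2, hb3⟩⟩ := hc
      have hwp : w (w.symm a) = a := w.apply_symm_apply a
      have hwq : w (w.symm b) = b := w.apply_symm_apply b
      have hwr : w (w.symm d) = d := w.apply_symm_apply d
      have hp := hsymmapp a (by omega) (by omega)
      have hq := hsymmapp b (by omega) (by omega)
      have hr := hsymmapp d (by omega) (by omega)
      have hpr : w.symm a < w.symm d :=
        lt_of_le_of_ne ha3 (fun e => by have := w.symm.injective e; omega)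
      have hqr : w.symm b < w.symm d :=
        lt_of_le_of_ne hb3 (fun e => by have := w.symm.injective e; omega)
      rcases lt_trichotomy (w.symm a) (w.symm b) with hpq | hpq | hpq
      · exact (h (w.symm a) (w.symm b) (w.symm d) hp.1 hpq hqr hr.2).2.2.1
          ⟨by rw [hwp, hwr]; omega, by rw [hwr, hwq]; omega, by rw [hwr]; exact hd⟩
      · have : a = b := by rw [← hwp, ← hwq, hpq]
        omega
      · exact (h (w.symm b) (w.symm a) (w.symm d) hq.1 hpq hpr hr.2).1
          ⟨by rw [hwp, hwr]; omega, by rw [hwr, hwq]; omega, by rw [hwr]; exact hd⟩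
    · intro u hu
      have hu' := hu
      rw [hU, Finset.mem_sdiff, Finset.mem_Icc] at hu'
      obtain ⟨hu2, _⟩ := hu'
      by_contra hc
      push_neg at hc
      obtain ⟨⟨a, ha1, ha2, ha3⟩, ⟨b, hb1, hb2, hb3⟩⟩ := hc
      have hwp : w (w.symm a) = a := w.apply_symm_apply a
      have hwq : w (w.symm b) = b := w.apply_symm_apply b
      have hwr : w (w.symm u) = u := w.apply_symm_apply u
      have hp := hsymmapp a (by omega) (by omega)
      have hq := hsymmapp b (by omega) (by omega)
      have hr := hsymmapp u (by omega) (by omega)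
      have hrp : w.symm u < w.symm a :=
        lt_of_le_of_ne ha3 (fun e => by have := w.symm.injective e; omega)
      have hrq : w.symm u < w.symm b :=
        lt_of_le_of_ne hb3 (fun e => by have := w.symm.injective e; omega)
      rcases lt_trichotomy (w.symm a) (w.symm b) with hpq | hpq | hpq
      · exact (h (w.symm u) (w.symm a) (w.symm b) hr.1 hrp hpq hq.2).2.2.2
          ⟨by rw [hwp, hwr]; omega, by rw [hwr, hwq]; omega, by rw [hwr]; exact hu⟩
      · have : a = b := by rw [← hwp, ← hwq, hpq]
        omega
      · exact (h (w.symm u) (w.symm b) (w.symm a) hr.1 hrq hpq hp.2).2.1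
          ⟨by rw [hwp, hwr]; omega, by rw [hwr, hwq]; omega, by rw [hwr]; exact hu⟩
  · rintro ⟨hDc, hUc⟩ i j k hi hij hjk hk
    have hi' := happ i (by omega) (by omega)
    have hj' := happ j (by omega) (by omega)
    have hk' := happ k (by omega) (by omega)
    have hsi : w.symm (w i) = i := w.symm_apply_apply i
    have hsj : w.symm (w j) = j := w.symm_apply_apply j
    have hsk : w.symm (w k) = k := w.symm_apply_apply k
    refine ⟨?_, ?_, ?_, ?_⟩
    · rintro ⟨h1, h2, h3⟩
      have hd2 := Finset.mem_Icc.mp (hD h3)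
      rcases hDc (w k) h3 with hcase | hcase
      · have := hcase (w j) (by omega) (by omega)
        rw [hsk, hsj] at this; omega
      · have := hcase (w i) (by omega) (by omega)
        rw [hsk, hsi] at this; omega
    · rintro ⟨h1, h2, h3⟩
      have h3' := h3
      rw [hU, Finset.mem_sdiff, Finset.mem_Icc] at h3'
      rcases hUc (w i) h3 with hcase | hcase
      · have := hcase (w k) (by omega) (by omega)
        rw [hsk, hsi] at this; omega
      · have := hcase (w j) (by omega) (by omega)
        rw [hsj, hsi] at this; omega
    · rintro ⟨h1, h2, h3⟩
      have hd2 := Finset.mem_Icc.mp (hD h3)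
      rcases hDc (w k) h3 with hcase | hcase
      · have := hcase (w i) (by omega) (by omega)
        rw [hsk, hsi] at this; omega
      · have := hcase (w j) (by omega) (by omega)
        rw [hsk, hsj] at this; omega
    · rintro ⟨h1, h2, h3⟩
      have h3' := h3
      rw [hU, Finset.mem_sdiff, Finset.mem_Icc] at h3'
      rcases hUc (w i) h3 with hcase | hcase
      · have := hcase (w j) (by omega) (by omega)
        rw [hsj, hsi] at this; omega
      · have := hcase (w k) (by omega) (by omega)
        rw [hsk, hsi] at this; omega
end

section
/- Let w be a c-singleton. Then for every upper-barred number u ∈ U and every index i with 1 ≤ i ≤ min(u−1, n+1−u), one has w(i) ≠ u; and for every lower-barred number d ∈ D and every index i with max(d+1, n+3−d) ≤ i ≤ n+1, one has w(i) ≠ d. -/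
lemma pigeonFalse (w : Equiv.Perm ℕ) (V C : Finset ℕ) (hcard : C.card < V.card)
    (h : ∀ v ∈ V, w.symm v ∈ C) : False := by
  have := Finset.card_le_card_of_injOn w.symm h (w.symm.injective.injOn)
  omega

lemma symm_mem (n : ℕ) (w : Equiv.Perm ℕ) (hw : ∀ x ∉ Finset.Icc 1 (n + 1), w x = x)
    {v : ℕ} (hv : v ∈ Finset.Icc 1 (n + 1)) : w.symm v ∈ Finset.Icc 1 (n + 1) := by
  by_contra h
  have h1 : w (w.symm v) = w.symm v := hw _ h
  rw [w.apply_symm_apply] at h1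
  exact h (h1 ▸ hv)

/-- Zero relations on a c-singleton `w`: for each upper-barred `u` and `1 ≤ i ≤ min(u-1,n+1-u)`
we have `w(i) ≠ u`, and for each lower-barred `d` and `max(d+1,n+3-d) ≤ i ≤ n+1` we have
`w(i) ≠ d`. -/
theorem statement2 (n : ℕ) (hn : 1 ≤ n) (D U : Finset ℕ)
    (hD : D ⊆ Finset.Icc 2 n) (hU : U = Finset.Icc 2 n \ D)
    (w : Equiv.Perm ℕ) (hw : ∀ x ∉ Finset.Icc 1 (n + 1), w x = x)
    (hsing : IsCSingleton n D U ⇑w) :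
    (∀ u ∈ U, ∀ i : ℕ, 1 ≤ i → i ≤ min (u - 1) (n + 1 - u) → w i ≠ u) ∧
    (∀ d ∈ D, ∀ i : ℕ, max (d + 1) (n + 3 - d) ≤ i → i ≤ n + 1 → w i ≠ d) := by
  constructor
  · intro u hu i hi1 hi2 heq
    have hu2 : 2 ≤ u ∧ u ≤ n := by
      rw [hU, Finset.mem_sdiff, Finset.mem_Icc] at hu; exact hu.1
    have hiu : i ≤ u - 1 := le_trans hi2 (min_le_left _ _)
    have hiu' : i ≤ n + 1 - u := le_trans hi2 (min_le_right _ _)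
    -- find p1 > i with w p1 < u
    have hp1 : ∃ p, i < p ∧ p ≤ n + 1 ∧ w p < u := by
      by_contra hno
      push_neg at hno
      apply pigeonFalse w (Finset.Icc 1 (u - 1)) (Finset.Icc 1 (i - 1))
      · rw [Nat.card_Icc, Nat.card_Icc]; omega
      · intro v hv
        rw [Finset.mem_Icc] at hv
        have hv' : v ∈ Finset.Icc 1 (n + 1) := by rw [Finset.mem_Icc]; omega
        have hm := symm_mem n w hw hv'
        rw [Finset.mem_Icc] at hm
        have hne : w.symm v ≠ i := by
          intro h; rw [← h, w.apply_symm_apply] at heq; omega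
        have hle : ¬ (i < w.symm v) := by
          intro h
          have := hno (w.symm v) h hm.2
          rw [w.apply_symm_apply] at this; omega
        rw [Finset.mem_Icc]; omega
    -- find p2 > i with w p2 > u
    have hp2 : ∃ p, i < p ∧ p ≤ n + 1 ∧ u < w p := by
      by_contra hno
      push_neg at hno
      apply pigeonFalse w (Finset.Icc (u + 1) (n + 1)) (Finset.Icc 1 (i - 1))
      · rw [Nat.card_Icc, Nat.card_Icc]; omega
      · intro v hv
        rw [Finset.mem_Icc] at hv
        have hv' : v ∈ Finset.Icc 1 (n + 1) := by rw [Finset.mem_Icc]; omega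
        have hm := symm_mem n w hw hv'
        rw [Finset.mem_Icc] at hm
        have hne : w.symm v ≠ i := by
          intro h; rw [← h, w.apply_symm_apply] at heq; omega
        have hle : ¬ (i < w.symm v) := by
          intro h
          have := hno (w.symm v) h hm.2
          rw [w.apply_symm_apply] at this; omega
        rw [Finset.mem_Icc]; omega
    obtain ⟨p1, hp1a, hp1b, hp1c⟩ := hp1
    obtain ⟨p2, hp2a, hp2b, hp2c⟩ := hp2
    rcases lt_trichotomy p1 p2 with h | h | h
    · exact (hsing i p1 p2 hi1 hp1a h hp2b).2.2.2 ⟨by omega, by omega, heq ▸ hu⟩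
    · subst h; omega
    · exact (hsing i p2 p1 hi1 hp2a h hp1b).2.1 ⟨by omega, by omega, heq ▸ hu⟩
  · intro d hd i hi1 hi2 heq
    have hd2 : 2 ≤ d ∧ d ≤ n := by
      have := hD hd; rw [Finset.mem_Icc] at this; exact this
    have hid : d + 1 ≤ i := le_trans (le_max_left _ _) hi1
    have hid' : n + 3 - d ≤ i := le_trans (le_max_right _ _) hi1
    -- find p1 < i with w p1 < d
    have hp1 : ∃ p, 1 ≤ p ∧ p < i ∧ w p < d := by
      by_contra hno
      push_neg at hno
      apply pigeonFalse w (Finset.Icc 1 (d - 1)) (Finset.Icc (i + 1) (n + 1))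
      · rw [Nat.card_Icc, Nat.card_Icc]; omega
      · intro v hv
        rw [Finset.mem_Icc] at hv
        have hv' : v ∈ Finset.Icc 1 (n + 1) := by rw [Finset.mem_Icc]; omega
        have hm := symm_mem n w hw hv'
        rw [Finset.mem_Icc] at hm
        have hne : w.symm v ≠ i := by
          intro h; rw [← h, w.apply_symm_apply] at heq; omega
        have hle : ¬ (w.symm v < i) := by
          intro h
          have := hno (w.symm v) hm.1 h
          rw [w.apply_symm_apply] at this; omega
        rw [Finset.mem_Icc]; omega
    -- find p2 < i with w p2 > d
    have hp2 : ∃ p, 1 ≤ p ∧ p < i ∧ d < w p := by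
      by_contra hno
      push_neg at hno
      apply pigeonFalse w (Finset.Icc (d + 1) (n + 1)) (Finset.Icc (i + 1) (n + 1))
      · rw [Nat.card_Icc, Nat.card_Icc]; omega
      · intro v hv
        rw [Finset.mem_Icc] at hv
        have hv' : v ∈ Finset.Icc 1 (n + 1) := by rw [Finset.mem_Icc]; omega
        have hm := symm_mem n w hw hv'
        rw [Finset.mem_Icc] at hm
        have hne : w.symm v ≠ i := by
          intro h; rw [← h, w.apply_symm_apply] at heq; omega
        have hle : ¬ (w.symm v < i) := by
          intro h
          have := hno (w.symm v) hm.1 h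
          rw [w.apply_symm_apply] at this; omega
        rw [Finset.mem_Icc]; omega
    obtain ⟨p1, hp1a, hp1b, hp1c⟩ := hp1
    obtain ⟨p2, hp2a, hp2b, hp2c⟩ := hp2
    rcases lt_trichotomy p1 p2 with h | h | h
    · exact (hsing p1 p2 i hp1a h hp2b hi2).2.2.1 ⟨by omega, by omega, heq ▸ hd⟩
    · subst h; omega
    · exact (hsing p2 p1 i hp2a h hp1b hi2).1 ⟨by omega, by omega, heq ▸ hd⟩
end

section
/- For every point X in Aff(c): X(i,u) = 0 for every upper-barred number u ∈ U and every i with 1 ≤ i ≤ min(u−1, n+1−u); and X(i,d) = 0 for every lower-barred number d ∈ D and every i with max(d+1, n+3−d) ≤ i ≤ n+1. -/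
/-- The permutation matrix of `w` (extended by the identity pattern outside `{1,…,n+1}`). -/
def permMatrix (w : ℕ → ℕ) : ℕ → ℕ → ℝ := fun i j => if w i = j then 1 else 0

/-- The set of permutation matrices of the c-singletons; its affine span is `Aff(c)`. -/
def cSingletonMatrices (n : ℕ) (D U : Finset ℕ) : Set (ℕ → ℕ → ℝ) :=
  {X | ∃ w : Equiv.Perm ℕ, (∀ x ∉ Finset.Icc 1 (n + 1), w x = x) ∧
        IsCSingleton n D U ⇑w ∧ X = permMatrix ⇑w}

lemma perm_maps (n : ℕ) (w : Equiv.Perm ℕ)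
    (hfix : ∀ x ∉ Finset.Icc 1 (n + 1), w x = x) :
    ∀ x ∈ Finset.Icc 1 (n + 1), w x ∈ Finset.Icc 1 (n + 1) := by
  intro x hx
  by_contra h
  have h2 : w (w x) = w x := hfix _ h
  have := w.injective h2
  rw [this] at h
  exact h hx

lemma keyU (n : ℕ) (D U : Finset ℕ) (w : Equiv.Perm ℕ)
    (hfix : ∀ x ∉ Finset.Icc 1 (n + 1), w x = x)
    (hw : IsCSingleton n D U ⇑w)
    (u : ℕ) (hu : u ∈ U) (hu2 : 2 ≤ u) (hun : u ≤ n)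
    (i : ℕ) (hi1 : 1 ≤ i) (hiu : i < u) (hin : i + u ≤ n + 1) :
    w i ≠ u := by
  intro heq
  have hmap := perm_maps n w hfix
  have hne : ∀ p, i < p → w p ≠ u := by
    intro p hp h
    have : p = i := w.injective (h.trans heq.symm)
    omega
  have hall : (∀ p ∈ Finset.Ioc i (n + 1), u < w p) ∨
      (∀ p ∈ Finset.Ioc i (n + 1), w p < u) := by
    by_contra h
    push_neg at h
    obtain ⟨⟨p, hp, hpu⟩, ⟨q, hq, hqu⟩⟩ := h
    simp only [Finset.mem_Ioc] at hp hq
    have hp' : w p < u := lt_of_le_of_ne hpu (hne p hp.1)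
    have hq' : u < w q := lt_of_le_of_ne hqu (fun h => hne q hq.1 h.symm)
    rcases lt_trichotomy p q with h1 | h1 | h1
    · exact (hw i p q hi1 hp.1 h1 hq.2).2.2.2 ⟨heq ▸ hp', heq ▸ hq', heq ▸ hu⟩
    · rw [h1] at hp'; omega
    · exact (hw i q p hi1 hq.1 h1 hp.2).2.1 ⟨heq ▸ hp', heq ▸ hq', heq ▸ hu⟩
  rcases hall with h | h
  · have hcard := Finset.card_le_card_of_injOn w
      (fun p hp => by
        have h1 := hmap p (by simp only [Finset.mem_Ioc] at hp; simp; omega)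
        simp only [Finset.mem_Icc] at h1
        simp only [Finset.mem_Ioc]
        exact ⟨h p hp, h1.2⟩ : ∀ p ∈ Finset.Ioc i (n + 1), w p ∈ Finset.Ioc u (n + 1))
      (fun a _ b _ hab => w.injective hab)
    simp only [Nat.card_Ioc] at hcard
    omega
  · have hcard := Finset.card_le_card_of_injOn w
      (fun p hp => by
        have h1 := hmap p (by simp only [Finset.mem_Ioc] at hp; simp; omega)
        simp only [Finset.mem_Icc] at h1
        simp only [Finset.mem_Ico]
        exact ⟨h1.1, h p hp⟩ : ∀ p ∈ Finset.Ioc i (n + 1), w p ∈ Finset.Ico 1 u)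
      (fun a _ b _ hab => w.injective hab)
    simp only [Nat.card_Ioc, Nat.card_Ico] at hcard
    omega

lemma keyD (n : ℕ) (D U : Finset ℕ) (w : Equiv.Perm ℕ)
    (hfix : ∀ x ∉ Finset.Icc 1 (n + 1), w x = x)
    (hw : IsCSingleton n D U ⇑w)
    (d : ℕ) (hd : d ∈ D) (hd2 : 2 ≤ d) (hdn : d ≤ n)
    (i : ℕ) (hid : d + 1 ≤ i) (hin : n + 3 ≤ i + d) (hi : i ≤ n + 1) :
    w i ≠ d := by
  intro heq
  have hmap := perm_maps n w hfix
  have hne : ∀ p, p < i → w p ≠ d := by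
    intro p hp h
    have : p = i := w.injective (h.trans heq.symm)
    omega
  have hall : (∀ p ∈ Finset.Ico 1 i, d < w p) ∨
      (∀ p ∈ Finset.Ico 1 i, w p < d) := by
    by_contra h
    push_neg at h
    obtain ⟨⟨p, hp, hpu⟩, ⟨q, hq, hqu⟩⟩ := h
    simp only [Finset.mem_Ico] at hp hq
    have hp' : w p < d := lt_of_le_of_ne hpu (hne p hp.2)
    have hq' : d < w q := lt_of_le_of_ne hqu (fun h => hne q hq.2 h.symm)
    rcases lt_trichotomy p q with h1 | h1 | h1
    · exact (hw p q i hp.1 h1 hq.2 hi).2.2.1 ⟨heq ▸ hp', heq ▸ hq', heq ▸ hd⟩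
    · rw [h1] at hp'; omega
    · exact (hw q p i hq.1 h1 hp.2 hi).1 ⟨heq ▸ hp', heq ▸ hq', heq ▸ hd⟩
  rcases hall with h | h
  · have hcard := Finset.card_le_card_of_injOn w
      (fun p hp => by
        have h1 := hmap p (by simp only [Finset.mem_Ico] at hp; simp; omega)
        simp only [Finset.mem_Icc] at h1
        simp only [Finset.mem_Ioc]
        exact ⟨h p hp, h1.2⟩ : ∀ p ∈ Finset.Ico 1 i, w p ∈ Finset.Ioc d (n + 1))
      (fun a _ b _ hab => w.injective hab)
    simp only [Nat.card_Ioc, Nat.card_Ico] at hcard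
    omega
  · have hcard := Finset.card_le_card_of_injOn w
      (fun p hp => by
        have h1 := hmap p (by simp only [Finset.mem_Ico] at hp; simp; omega)
        simp only [Finset.mem_Icc] at h1
        simp only [Finset.mem_Ico]
        exact ⟨h1.1, h p hp⟩ : ∀ p ∈ Finset.Ico 1 i, w p ∈ Finset.Ico 1 d)
      (fun a _ b _ hab => w.injective hab)
    simp only [Nat.card_Ico] at hcard
    omega

lemma span_zero (n : ℕ) (D U : Finset ℕ) (X : ℕ → ℕ → ℝ)
    (hX : X ∈ affineSpan ℝ (cSingletonMatrices n D U)) (i j : ℕ)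
    (hgen : ∀ w : Equiv.Perm ℕ, (∀ x ∉ Finset.Icc 1 (n + 1), w x = x) →
      IsCSingleton n D U ⇑w → w i ≠ j) :
    X i j = 0 := by
  refine affineSpan_induction (p := fun Y => Y i j = 0) hX ?_ ?_
  · rintro Y ⟨w, hfix, hsing, rfl⟩
    simp [permMatrix, hgen w hfix hsing]
  · intro c A B C hA hB hC
    simp only [Pi.vadd_apply, Pi.smul_apply, Pi.sub_apply, vadd_eq_add, vsub_eq_sub,
      Pi.add_apply] at *
    rw [hA, hB, hC]
    simp

/-- Zero relations on `Aff(c)`: for every point `X` of `Aff(c)`, `X(i,u) = 0` for upper-barred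
`u` and `1 ≤ i ≤ min(u-1, n+1-u)`, and `X(i,d) = 0` for lower-barred `d` and
`max(d+1, n+3-d) ≤ i ≤ n+1`. -/
theorem statement3 (n : ℕ) (hn : 1 ≤ n) (D U : Finset ℕ)
    (hD : D ⊆ Finset.Icc 2 n) (hU : U = Finset.Icc 2 n \ D)
    (X : ℕ → ℕ → ℝ) (hX : X ∈ affineSpan ℝ (cSingletonMatrices n D U)) :
    (∀ u ∈ U, ∀ i : ℕ, 1 ≤ i → i ≤ min (u - 1) (n + 1 - u) → X i u = 0) ∧
    (∀ d ∈ D, ∀ i : ℕ, max (d + 1) (n + 3 - d) ≤ i → i ≤ n + 1 → X i d = 0) := by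
  constructor
  · intro u hu i hi1 hi2
    have hu' : u ∈ Finset.Icc 2 n := by rw [hU] at hu; exact Finset.mem_sdiff.mp hu |>.1
    simp only [Finset.mem_Icc] at hu'
    exact span_zero n D U X hX i u (fun w hfix hsing =>
      keyU n D U w hfix hsing u hu hu'.1 hu'.2 i hi1 (by omega) (by omega))
  · intro d hd i hi1 hi2
    have hd' : d ∈ Finset.Icc 2 n := hD hd
    simp only [Finset.mem_Icc] at hd'
    exact span_zero n D U X hX i d (fun w hfix hsing =>
      keyD n D U w hfix hsing d hd hd'.1 hd'.2 i (by omega) (by omega) hi2)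
end

section
/- Let w be a c-singleton, let y be an integer with 2 ≤ y and either 2y ≤ n+1 or (2y = n+2 and y ∈ D), and let z be any integer. Then there is exactly one index i ∈ {1,...,y} such that ν_c(w(i)) ≡ z (mod y). -/
/-- The function ν_c determined by the lower-barred set `D` and the upper-barred set `U`. -/
def nu (n : ℕ) (D U : Finset ℕ) (i : ℕ) : ℤ :=
  if i = 1 then 0
  else if i = n + 1 then (D.card : ℤ) + 1
  else if i ∈ D then ((D.filter (fun d => d ≤ i)).card : ℤ)
  else if 2 * i ≤ n + 1 then -(((U.filter (fun u => u ≤ i)).card : ℤ))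
  else (n : ℤ) + 1 - ((U.filter (fun u => u ≤ i)).card : ℤ)

lemma count_lt_count {F : Finset ℕ} {a b : ℕ} (hb : b ∈ F) (hab : a < b) :
    (F.filter (fun x => x ≤ a)).card < (F.filter (fun x => x ≤ b)).card := by
  apply Finset.card_lt_card
  rw [Finset.ssubset_iff_of_subset]
  · exact ⟨b, by simp [hb], by simp; omega⟩
  · intro x hx
    simp only [Finset.mem_filter] at hx ⊢
    exact ⟨hx.1, by omega⟩

lemma count_le_count {F : Finset ℕ} {a b : ℕ} (hab : a ≤ b) :
    (F.filter (fun x => x ≤ a)).card ≤ (F.filter (fun x => x ≤ b)).card := by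
  apply Finset.card_le_card
  intro x hx
  simp only [Finset.mem_filter] at hx ⊢
  exact ⟨hx.1, by omega⟩

lemma eq_of_count_eq {F : Finset ℕ} {a b : ℕ} (ha : a ∈ F) (hb : b ∈ F)
    (h : (F.filter (fun x => x ≤ a)).card = (F.filter (fun x => x ≤ b)).card) : a = b := by
  rcases lt_trichotomy a b with h' | h' | h'
  · exact absurd h (count_lt_count hb h').ne
  · exact h'
  · exact absurd h.symm (count_lt_count ha h').ne

lemma Ucard {n : ℕ} {D U : Finset ℕ} (hD : D ⊆ Finset.Icc 2 n)
    (hU : U = Finset.Icc 2 n \ D) : U.card + D.card = n - 1 := by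
  subst hU
  rw [Finset.card_sdiff_of_subset hD, Nat.card_Icc]
  have := Finset.card_le_card hD
  rw [Nat.card_Icc] at this
  omega

lemma nu_cases {n : ℕ} {D U : Finset ℕ} (hn : 1 ≤ n) (hD : D ⊆ Finset.Icc 2 n)
    (hU : U = Finset.Icc 2 n \ D) {x : ℕ} (hx : x ∈ Finset.Icc 1 (n + 1)) :
    (x = 1 ∧ nu n D U x = 0)
    ∨ (x = n + 1 ∧ nu n D U x = (D.card : ℤ) + 1)
    ∨ (x ∈ D ∧ nu n D U x = ((D.filter (fun d => d ≤ x)).card : ℤ)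
        ∧ 1 ≤ (D.filter (fun d => d ≤ x)).card ∧ (D.filter (fun d => d ≤ x)).card ≤ D.card)
    ∨ (x ∈ U ∧ 2 * x ≤ n + 1 ∧ nu n D U x = -(((U.filter (fun u => u ≤ x)).card : ℤ))
        ∧ 1 ≤ (U.filter (fun u => u ≤ x)).card
        ∧ (U.filter (fun u => u ≤ x)).card ≤ (U.filter (fun u => 2 * u ≤ n + 1)).card)
    ∨ (x ∈ U ∧ n + 2 ≤ 2 * x ∧ nu n D U x = (n : ℤ) + 1 - ((U.filter (fun u => u ≤ x)).card : ℤ)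
        ∧ (U.filter (fun u => 2 * u ≤ n + 1)).card + 1 ≤ (U.filter (fun u => u ≤ x)).card
        ∧ (U.filter (fun u => u ≤ x)).card ≤ U.card) := by
  simp only [Finset.mem_Icc] at hx
  by_cases h1 : x = 1
  · exact Or.inl ⟨h1, by simp [nu, h1]⟩
  by_cases h2 : x = n + 1
  · refine Or.inr (Or.inl ⟨h2, ?_⟩)
    have : ¬ (x = 1) := h1
    simp [nu, h2]
    omega
  have hx2 : 2 ≤ x := by omega
  have hxn : x ≤ n := by omega
  by_cases h3 : x ∈ D
  · refine Or.inr (Or.inr (Or.inl ⟨h3, ?_, ?_, Finset.card_filter_le _ _⟩))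
    · simp [nu, h1, h2, h3]
    · exact Finset.card_pos.mpr ⟨x, by simp [h3]⟩
  have h4 : x ∈ U := by
    rw [hU, Finset.mem_sdiff, Finset.mem_Icc]
    exact ⟨⟨hx2, hxn⟩, h3⟩
  by_cases h5 : 2 * x ≤ n + 1
  · refine Or.inr (Or.inr (Or.inr (Or.inl ⟨h4, h5, ?_, ?_, ?_⟩)))
    · simp [nu, h1, h2, h3, h5]
    · exact Finset.card_pos.mpr ⟨x, by simp [h4]⟩
    · apply Finset.card_le_card
      intro u hu
      simp only [Finset.mem_filter] at hu ⊢
      exact ⟨hu.1, by omega⟩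
  · refine Or.inr (Or.inr (Or.inr (Or.inr ⟨h4, by omega, ?_, ?_, Finset.card_filter_le _ _⟩)))
    · simp [nu, h1, h2, h3, h5]
    · have hins : insert x (U.filter (fun u => 2 * u ≤ n + 1)) ⊆ U.filter (fun u => u ≤ x) := by
        intro u hu
        rcases Finset.mem_insert.mp hu with h | h
        · subst h; simp [h4]
        · simp only [Finset.mem_filter] at h ⊢
          exact ⟨h.1, by omega⟩
      have := Finset.card_le_card hins
      rwa [Finset.card_insert_of_notMem (by simp only [Finset.mem_filter]; tauto)] at this

lemma nu_inj {n : ℕ} {D U : Finset ℕ} (hn : 1 ≤ n) (hD : D ⊆ Finset.Icc 2 n)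
    (hU : U = Finset.Icc 2 n \ D) {a b : ℕ} (ha : a ∈ Finset.Icc 1 (n + 1))
    (hb : b ∈ Finset.Icc 1 (n + 1)) (h : nu n D U a = nu n D U b) : a = b := by
  have hcard := Ucard hD hU
  rcases nu_cases hn hD hU ha with ⟨e1, v1⟩ | ⟨e1, v1⟩ | ⟨e1, v1, r1, r2⟩ | ⟨e1, e1', v1, r1, r2⟩ | ⟨e1, e1', v1, r1, r2⟩ <;>
    rcases nu_cases hn hD hU hb with ⟨f1, u1⟩ | ⟨f1, u1⟩ | ⟨f1, u1, t1, t2⟩ | ⟨f1, f1', u1, t1, t2⟩ | ⟨f1, f1', u1, t1, t2⟩ <;>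
      rw [v1, u1] at h
  all_goals try omega
  all_goals
    first
      | exact eq_of_count_eq e1 f1 (by omega)
      | (have hs : (U.filter (fun u => 2 * u ≤ n + 1)).card ≤ U.card := Finset.card_filter_le _ _
         first
           | omega
           | exact eq_of_count_eq e1 f1 (by omega))

lemma nu_image {n : ℕ} {D U : Finset ℕ} (hn : 1 ≤ n) (hD : D ⊆ Finset.Icc 2 n)
    (hU : U = Finset.Icc 2 n \ D) :
    (Finset.Icc 1 (n + 1)).image (nu n D U) =
      Finset.Icc (-(((U.filter (fun u => 2 * u ≤ n + 1)).card : ℤ)))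
        ((n : ℤ) - ((U.filter (fun u => 2 * u ≤ n + 1)).card : ℤ)) := by
  have hcard := Ucard hD hU
  have hs : (U.filter (fun u => 2 * u ≤ n + 1)).card ≤ U.card := Finset.card_filter_le _ _
  apply Finset.eq_of_subset_of_card_le
  · intro t ht
    obtain ⟨x, hx, rfl⟩ := Finset.mem_image.mp ht
    rcases nu_cases hn hD hU hx with ⟨e1, v1⟩ | ⟨e1, v1⟩ | ⟨e1, v1, r1, r2⟩ |
        ⟨e1, e1', v1, r1, r2⟩ | ⟨e1, e1', v1, r1, r2⟩ <;>
      rw [v1] <;> rw [Finset.mem_Icc] <;> constructor <;> push_cast <;> omega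
  · rw [Finset.card_image_of_injOn (fun a ha b hb h => nu_inj hn hD hU ha hb h),
      Nat.card_Icc, Int.card_Icc]
    omega

lemma w_mem {n : ℕ} {w : Equiv.Perm ℕ} (hw : ∀ x ∉ Finset.Icc 1 (n + 1), w x = x)
    {x : ℕ} (hx : x ∈ Finset.Icc 1 (n + 1)) : w x ∈ Finset.Icc 1 (n + 1) := by
  by_contra h
  have h2 := hw _ h
  have : w x = x := w.injective h2
  rw [this] at h
  exact h hx

lemma wsymm_mem {n : ℕ} {w : Equiv.Perm ℕ} (hw : ∀ x ∉ Finset.Icc 1 (n + 1), w x = x)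
    {x : ℕ} (hx : x ∈ Finset.Icc 1 (n + 1)) : w.symm x ∈ Finset.Icc 1 (n + 1) := by
  by_contra h
  have h2 := hw _ h
  rw [Equiv.apply_symm_apply] at h2
  rw [← h2] at h
  exact h hx

lemma smallBound {n : ℕ} {D U : Finset ℕ} (hD : D ⊆ Finset.Icc 2 n)
    (hU : U = Finset.Icc 2 n \ D) {w : Equiv.Perm ℕ}
    (hw : ∀ x ∉ Finset.Icc 1 (n + 1), w x = x) (hsing : IsCSingleton n D U ⇑w)
    {y : ℕ} (hy2 : 2 * y ≤ n + 2) {u m : ℕ} (hu : u ∈ U) (hus : 2 * u ≤ n + 1)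
    (hp : w.symm u ≤ y) (hm : m < u) (hq1 : y < w.symm m) (hq2 : w.symm m ≤ n + 1) :
    False := by
  have huI : u ∈ Finset.Icc 2 n := by rw [hU] at hu; exact (Finset.mem_sdiff.mp hu).1
  rw [Finset.mem_Icc] at huI
  have hp1 : 1 ≤ w.symm u := by
    have := wsymm_mem hw (x := u) (by rw [Finset.mem_Icc]; omega)
    rw [Finset.mem_Icc] at this; exact this.1
  have key : ∀ v, u ≤ v → v ≤ n + 1 → w.symm v ≤ w.symm u := by
    intro v hv1 hv2
    by_contra hj
    push_neg at hj
    have hvu : u < v := by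
      rcases eq_or_lt_of_le hv1 with h | h
      · subst h; omega
      · exact h
    have hvm : v ≠ m := by omega
    have hjq : w.symm v ≠ w.symm m := fun h => hvm (w.symm.injective h)
    have hwp : w (w.symm u) = u := Equiv.apply_symm_apply w u
    have hwq : w (w.symm m) = m := Equiv.apply_symm_apply w m
    have hwj : w (w.symm v) = v := Equiv.apply_symm_apply w v
    have hjn : w.symm v ≤ n + 1 := by
      have := wsymm_mem hw (x := v) (by rw [Finset.mem_Icc]; omega)
      rw [Finset.mem_Icc] at this; exact this.2
    rcases lt_or_gt_of_ne hjq with h' | h'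
    · exact (hsing (w.symm u) (w.symm v) (w.symm m) hp1 hj h' hq2).2.1
        (by rw [hwp, hwq, hwj]; exact ⟨hm, hvu, hu⟩)
    · exact (hsing (w.symm u) (w.symm m) (w.symm v) hp1 (by omega) h' hjn).2.2.2
        (by rw [hwp, hwq, hwj]; exact ⟨hm, hvu, hu⟩)
  have hcount : (Finset.Icc u (n + 1)).card ≤ (Finset.Icc 1 (w.symm u)).card := by
    apply Finset.card_le_card_of_injOn (fun v => w.symm v)
    · intro v hv
      rw [Finset.mem_coe, Finset.mem_Icc] at hv ⊢
      have h1 : 1 ≤ w.symm v := by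
        have := wsymm_mem hw (x := v) (by rw [Finset.mem_Icc]; omega)
        rw [Finset.mem_Icc] at this; exact this.1
      exact ⟨h1, key v hv.1 hv.2⟩
    · intro a _ b _ h
      exact w.symm.injective h
  rw [Nat.card_Icc, Nat.card_Icc] at hcount
  omega

lemma largeBound {n : ℕ} {D U : Finset ℕ} (hD : D ⊆ Finset.Icc 2 n)
    (hU : U = Finset.Icc 2 n \ D) {w : Equiv.Perm ℕ}
    (hw : ∀ x ∉ Finset.Icc 1 (n + 1), w x = x) (hsing : IsCSingleton n D U ⇑w)
    {y : ℕ} (hy' : 2 * y ≤ n + 1 ∨ (2 * y = n + 2 ∧ y ∈ D)) {u m : ℕ} (hu : u ∈ U)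
    (hus : n + 2 ≤ 2 * u) (hp : w.symm u ≤ y) (hm : u < m) (hmn : m ≤ n + 1)
    (hq1 : y < w.symm m) (hq2 : w.symm m ≤ n + 1) : False := by
  have huI : u ∈ Finset.Icc 2 n := by rw [hU] at hu; exact (Finset.mem_sdiff.mp hu).1
  rw [Finset.mem_Icc] at huI
  have hp1 : 1 ≤ w.symm u := by
    have := wsymm_mem hw (x := u) (by rw [Finset.mem_Icc]; omega)
    rw [Finset.mem_Icc] at this; exact this.1
  have key : ∀ v, 1 ≤ v → v ≤ u → w.symm v ≤ w.symm u := by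
    intro v hv1 hv2
    by_contra hj
    push_neg at hj
    have hvu : v < u := by
      rcases eq_or_lt_of_le hv2 with h | h
      · subst h; omega
      · exact h
    have hvm : v ≠ m := by omega
    have hjq : w.symm v ≠ w.symm m := fun h => hvm (w.symm.injective h)
    have hwp : w (w.symm u) = u := Equiv.apply_symm_apply w u
    have hwq : w (w.symm m) = m := Equiv.apply_symm_apply w m
    have hwj : w (w.symm v) = v := Equiv.apply_symm_apply w v
    have hjn : w.symm v ≤ n + 1 := by
      have := wsymm_mem hw (x := v) (by rw [Finset.mem_Icc]; omega)
      rw [Finset.mem_Icc] at this; exact this.2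
    rcases lt_or_gt_of_ne hjq with h' | h'
    · exact (hsing (w.symm u) (w.symm v) (w.symm m) hp1 hj h' hq2).2.2.2
        (by rw [hwp, hwq, hwj]; exact ⟨hvu, hm, hu⟩)
    · exact (hsing (w.symm u) (w.symm m) (w.symm v) hp1 (by omega) h' hjn).2.1
        (by rw [hwp, hwq, hwj]; exact ⟨hvu, hm, hu⟩)
  have hcount : (Finset.Icc 1 u).card ≤ (Finset.Icc 1 (w.symm u)).card := by
    apply Finset.card_le_card_of_injOn (fun v => w.symm v)
    · intro v hv
      rw [Finset.mem_coe, Finset.mem_Icc] at hv ⊢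
      have h1 : 1 ≤ w.symm v := by
        have := wsymm_mem hw (x := v) (by rw [Finset.mem_Icc]; omega)
        rw [Finset.mem_Icc] at this; exact this.1
      exact ⟨h1, key v hv.1 hv.2⟩
    · intro a _ b _ h
      exact w.symm.injective h
  rw [Nat.card_Icc, Nat.card_Icc] at hcount
  rcases hy' with h | ⟨h, hyD⟩
  · omega
  · have huy : u = y := by omega
    rw [hU] at hu
    exact (Finset.mem_sdiff.mp hu).2 (huy ▸ hyD)

lemma core {n : ℕ} {D U : Finset ℕ} (hn : 1 ≤ n) (hD : D ⊆ Finset.Icc 2 n)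
    (hU : U = Finset.Icc 2 n \ D) {w : Equiv.Perm ℕ}
    (hw : ∀ x ∉ Finset.Icc 1 (n + 1), w x = x) (hsing : IsCSingleton n D U ⇑w)
    {y : ℕ} (hy' : 2 * y ≤ n + 1 ∨ (2 * y = n + 2 ∧ y ∈ D))
    {pa pb m : ℕ} (hpa : pa ∈ Finset.Icc 1 y) (hpb : pb ∈ Finset.Icc 1 y)
    (hm : m ∈ Finset.Icc 1 (n + 1))
    (h1 : nu n D U (w pa) < nu n D U m) (h2 : nu n D U m < nu n D U (w pb)) :
    w.symm m ∈ Finset.Icc 1 y := by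
  have hcard := Ucard hD hU
  have hs : (U.filter (fun u => 2 * u ≤ n + 1)).card ≤ U.card := Finset.card_filter_le _ _
  have hy2 : 2 * y ≤ n + 2 := by rcases hy' with h | ⟨h, _⟩ <;> omega
  rw [Finset.mem_Icc] at hpa hpb
  have hyn : y ≤ n + 1 := by omega
  have hpaI : pa ∈ Finset.Icc 1 (n + 1) := by rw [Finset.mem_Icc]; omega
  have hpbI : pb ∈ Finset.Icc 1 (n + 1) := by rw [Finset.mem_Icc]; omega
  have haI : w pa ∈ Finset.Icc 1 (n + 1) := w_mem hw hpaI
  have hbI : w pb ∈ Finset.Icc 1 (n + 1) := w_mem hw hpbI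
  have hmn : m ≤ n + 1 := (Finset.mem_Icc.mp hm).2
  have hq2 : w.symm m ≤ n + 1 := (Finset.mem_Icc.mp (wsymm_mem hw hm)).2
  have hq0 : 1 ≤ w.symm m := (Finset.mem_Icc.mp (wsymm_mem hw hm)).1
  by_contra hcon
  rw [Finset.mem_Icc] at hcon
  have hq1 : y < w.symm m := by omega
  -- m is not w pa or w pb
  have hma : m ≠ w pa := by
    intro h; rw [h, Equiv.symm_apply_apply] at hq1; omega
  have hmb : m ≠ w pb := by
    intro h; rw [h, Equiv.symm_apply_apply] at hq1; omega
  have hsa : w.symm (w pa) = pa := Equiv.symm_apply_apply w pa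
  have hsb : w.symm (w pb) = pb := Equiv.symm_apply_apply w pb
  -- memberships in Icc 2 n for D/U elements
  have hDmem : ∀ x ∈ D, 2 ≤ x ∧ x ≤ n := fun x hx => Finset.mem_Icc.mp (hD hx)
  have hUmem : ∀ x ∈ U, 2 ≤ x ∧ x ≤ n := fun x hx => by
    rw [hU] at hx; exact Finset.mem_Icc.mp (Finset.mem_sdiff.mp hx).1
  rcases nu_cases hn hD hU hm with ⟨e1, v1⟩ | ⟨e1, v1⟩ | ⟨e1, v1, r1, r2⟩ |
      ⟨e1, e1', v1, r1, r2⟩ | ⟨e1, e1', v1, r1, r2⟩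
  · -- m = 1 : the value earlier (w pa) must be a small U element bigger than m
    rcases nu_cases hn hD hU haI with ⟨f1, u1⟩ | ⟨f1, u1⟩ | ⟨f1, u1, t1, t2⟩ |
        ⟨f1, f1', u1, t1, t2⟩ | ⟨f1, f1', u1, t1, t2⟩
    all_goals rw [v1, u1] at h1
    all_goals try omega
    refine smallBound hD hU hw hsing hy2 f1 f1' (by rw [hsa]; omega) ?_ hq1 hq2
    have := hUmem _ f1; omega
  · -- m = n + 1
    rcases nu_cases hn hD hU hbI with ⟨f1, u1⟩ | ⟨f1, u1⟩ | ⟨f1, u1, t1, t2⟩ |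
        ⟨f1, f1', u1, t1, t2⟩ | ⟨f1, f1', u1, t1, t2⟩
    all_goals rw [v1, u1] at h2
    all_goals try omega
    refine largeBound hD hU hw hsing hy' f1 f1' (by rw [hsb]; omega) ?_ hmn hq1 hq2
    have := hUmem _ f1; omega
  · -- m ∈ D
    have hmd := hDmem _ e1
    rcases lt_trichotomy (w pa) m with hc | hc | hc
    · -- a < m ; look at b
      rcases lt_trichotomy (w pb) m with hc' | hc' | hc'
      · -- b < m : b must be large U
        rcases nu_cases hn hD hU hbI with ⟨f1, u1⟩ | ⟨f1, u1⟩ | ⟨f1, u1, t1, t2⟩ |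
            ⟨f1, f1', u1, t1, t2⟩ | ⟨f1, f1', u1, t1, t2⟩
        all_goals rw [v1, u1] at h2
        · omega
        · omega
        · -- b ∈ D with b < m: counts increase
          have := count_lt_count (F := D) e1 hc'
          omega
        · omega
        · exact largeBound hD hU hw hsing hy' f1 f1' (by rw [hsb]; omega) hc' hmn hq1 hq2
      · exact hmb hc'.symm
      · -- a < m < b : pattern on m ∈ D
        have hab : pa ≠ pb := by
          intro h; rw [h] at hc; omega
        have hwq : w (w.symm m) = m := Equiv.apply_symm_apply w m
        rcases lt_or_gt_of_ne hab with h' | h'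
        · exact (hsing pa pb (w.symm m) hpa.1 h' (by omega) hq2).2.2.1
            (by rw [hwq]; exact ⟨hc, hc', e1⟩)
        · exact (hsing pb pa (w.symm m) hpb.1 h' (by omega) hq2).1
            (by rw [hwq]; exact ⟨hc, hc', e1⟩)
    · exact hma hc.symm
    · -- a > m : a must be small U
      rcases nu_cases hn hD hU haI with ⟨f1, u1⟩ | ⟨f1, u1⟩ | ⟨f1, u1, t1, t2⟩ |
          ⟨f1, f1', u1, t1, t2⟩ | ⟨f1, f1', u1, t1, t2⟩
      all_goals rw [v1, u1] at h1
      · omega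
      · omega
      · have := count_lt_count (F := D) f1 hc
        omega
      · exact smallBound hD hU hw hsing hy2 f1 f1' (by rw [hsa]; omega) hc hq1 hq2
      · omega
  · -- m ∈ U small : a must be small U bigger than m
    rcases nu_cases hn hD hU haI with ⟨f1, u1⟩ | ⟨f1, u1⟩ | ⟨f1, u1, t1, t2⟩ |
        ⟨f1, f1', u1, t1, t2⟩ | ⟨f1, f1', u1, t1, t2⟩
    all_goals rw [v1, u1] at h1
    all_goals try omega
    have hmon : w pa ≤ m → (U.filter (fun x => x ≤ w pa)).card ≤ (U.filter (fun x => x ≤ m)).card :=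
      fun h => count_le_count h
    have : m < w pa := by omega
    exact smallBound hD hU hw hsing hy2 f1 f1' (by rw [hsa]; omega) this hq1 hq2
  · -- m ∈ U large : b must be large U smaller than m
    rcases nu_cases hn hD hU hbI with ⟨f1, u1⟩ | ⟨f1, u1⟩ | ⟨f1, u1, t1, t2⟩ |
        ⟨f1, f1', u1, t1, t2⟩ | ⟨f1, f1', u1, t1, t2⟩
    all_goals rw [v1, u1] at h2
    all_goals try omega
    have hmon : m ≤ w pb → (U.filter (fun x => x ≤ m)).card ≤ (U.filter (fun x => x ≤ w pb)).card :=
      fun h => count_le_count h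
    have : w pb < m := by omega
    exact largeBound hD hU hw hsing hy' f1 f1' (by rw [hsb]; omega) this hmn hq1 hq2

/-- If `w` is a c-singleton, `2 ≤ y` with `2y ≤ n+1` (or `2y = n+2` and `y ∈ D`), and `z` is
any integer, then there is exactly one index `i ∈ {1,…,y}` with `ν_c(w(i)) ≡ z (mod y)`. -/
theorem statement5 (n : ℕ) (hn : 1 ≤ n) (D U : Finset ℕ)
    (hD : D ⊆ Finset.Icc 2 n) (hU : U = Finset.Icc 2 n \ D)
    (w : Equiv.Perm ℕ) (hw : ∀ x ∉ Finset.Icc 1 (n + 1), w x = x)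
    (hsing : IsCSingleton n D U ⇑w)
    (y : ℕ) (hy : 2 ≤ y) (hy' : 2 * y ≤ n + 1 ∨ (2 * y = n + 2 ∧ y ∈ D)) (z : ℤ) :
    ∃! i : ℕ, i ∈ Finset.Icc 1 y ∧ nu n D U (w i) ≡ z [ZMOD (y : ℤ)] := by
  have hy2 : 2 * y ≤ n + 2 := by rcases hy' with h | ⟨h, _⟩ <;> omega
  have hyn : y ≤ n + 1 := by omega
  have hsub : Finset.Icc 1 y ⊆ Finset.Icc 1 (n + 1) := by
    intro i hi; rw [Finset.mem_Icc] at hi ⊢; omega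
  have hwI : ∀ i ∈ Finset.Icc 1 y, w i ∈ Finset.Icc 1 (n + 1) :=
    fun i hi => w_mem hw (hsub hi)
  set T : Finset ℤ := (Finset.Icc 1 y).image (fun i => nu n D U (w i)) with hT
  have hTne : T.Nonempty := ⟨nu n D U (w 1), Finset.mem_image.mpr ⟨1, by
    rw [Finset.mem_Icc]; omega, rfl⟩⟩
  have hTcard : T.card = y := by
    rw [hT, Finset.card_image_of_injOn, Nat.card_Icc]
    · omega
    · intro i hi j hj h
      have hi' : i ∈ Finset.Icc 1 y := hi
      have hj' : j ∈ Finset.Icc 1 y := hj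
      exact w.injective (nu_inj hn hD hU (hwI i hi') (hwI j hj') h)
  set tmin := T.min' hTne with htmin
  set tmax := T.max' hTne with htmax
  have hTsub : T ⊆ Finset.Icc tmin tmax := by
    intro t ht; rw [Finset.mem_Icc]; exact ⟨T.min'_le t ht, T.le_max' t ht⟩
  have hIccT : Finset.Icc tmin tmax ⊆ T := by
    intro t ht
    rw [Finset.mem_Icc] at ht
    rcases eq_or_lt_of_le ht.1 with h | hlt
    · rw [← h]; exact T.min'_mem hTne
    rcases eq_or_lt_of_le ht.2 with h | hgt
    · rw [h]; exact T.max'_mem hTne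
    obtain ⟨pa, hpa, hva⟩ := Finset.mem_image.mp (T.min'_mem hTne)
    obtain ⟨pb, hpb, hvb⟩ := Finset.mem_image.mp (T.max'_mem hTne)
    -- t lies in the range of nu
    have hrange : t ∈ (Finset.Icc 1 (n + 1)).image (nu n D U) := by
      rw [nu_image hn hD hU, Finset.mem_Icc]
      have hamem : nu n D U (w pa) ∈ (Finset.Icc 1 (n + 1)).image (nu n D U) :=
        Finset.mem_image.mpr ⟨w pa, hwI pa hpa, rfl⟩
      have hbmem : nu n D U (w pb) ∈ (Finset.Icc 1 (n + 1)).image (nu n D U) :=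
        Finset.mem_image.mpr ⟨w pb, hwI pb hpb, rfl⟩
      rw [nu_image hn hD hU, Finset.mem_Icc] at hamem hbmem
      rw [hva] at hamem
      rw [hvb] at hbmem
      omega
    obtain ⟨m, hm, hvm⟩ := Finset.mem_image.mp hrange
    have hcore := core hn hD hU hw hsing hy' hpa hpb hm
      (by rw [hva, hvm]; exact hlt) (by rw [hvb, hvm]; exact hgt)
    refine Finset.mem_image.mpr ⟨w.symm m, hcore, ?_⟩
    rw [Equiv.apply_symm_apply]
    exact hvm
  have hTeq : T = Finset.Icc tmin tmax := le_antisymm hTsub hIccT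
  have hmaxeq : tmax = tmin + (y : ℤ) - 1 := by
    have := hTcard
    rw [hTeq, Int.card_Icc] at this
    omega
  have hyz : (0 : ℤ) < (y : ℤ) := by positivity
  -- existence
  have ht0 : tmin + (z - tmin) % (y : ℤ) ∈ T := by
    rw [hTeq, Finset.mem_Icc]
    have h1 : 0 ≤ (z - tmin) % (y : ℤ) := Int.emod_nonneg _ (by omega)
    have h2 : (z - tmin) % (y : ℤ) < y := Int.emod_lt_of_pos _ hyz
    omega
  obtain ⟨i, hi, hvi⟩ := Finset.mem_image.mp ht0
  have hicong : nu n D U (w i) ≡ z [ZMOD (y : ℤ)] := by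
    rw [hvi]
    have h1 : (z - tmin) % (y : ℤ) ≡ z - tmin [ZMOD (y : ℤ)] :=
      Int.emod_emod_of_dvd _ dvd_rfl
    have h2 : tmin + (z - tmin) % (y : ℤ) ≡ tmin + (z - tmin) [ZMOD (y : ℤ)] :=
      Int.ModEq.add_left _ h1
    simpa using h2
  refine ⟨i, ⟨hi, hicong⟩, ?_⟩
  intro j ⟨hj, hjcong⟩
  have hcong : nu n D U (w j) ≡ nu n D U (w i) [ZMOD (y : ℤ)] :=
    hjcong.trans hicong.symm
  have hdvd : (y : ℤ) ∣ nu n D U (w i) - nu n D U (w j) := hcong.dvd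
  have hmemj : nu n D U (w j) ∈ T := Finset.mem_image.mpr ⟨j, hj, rfl⟩
  have hmemi : nu n D U (w i) ∈ T := Finset.mem_image.mpr ⟨i, hi, rfl⟩
  rw [hTeq, Finset.mem_Icc] at hmemj hmemi
  have heq : nu n D U (w i) - nu n D U (w j) = 0 :=
    Int.eq_zero_of_abs_lt_dvd hdvd (by rw [abs_lt]; omega)
  have : w j = w i := nu_inj hn hD hU (hwI j hj) (hwI i hi) (by omega)
  exact w.injective this
end

section
/- Let X be a point of Aff(c), let y be an integer with 2 ≤ y and either 2y ≤ n+1 or (2y = n+2 and y ∈ D), and let z be any integer. Then ∑_j ∑_{i=1}^{y} X(i,j) = 1, where the outer sum ranges over all j ∈ {1,...,n+1} with ν_c(j) ≡ z (mod y). -/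
namespace S6aux

open Finset

variable {n : ℕ} {D U : Finset ℕ}

lemma nu_one : nu n D U 1 = 0 := by simp [nu]

lemma nu_top (hn : 1 ≤ n) : nu n D U (n + 1) = (D.card : ℤ) + 1 := by
  rw [nu, if_neg (by omega), if_pos rfl]

lemma nu_memD (hD : D ⊆ Finset.Icc 2 n) {j : ℕ} (hj : j ∈ D) :
    nu n D U j = ((D.filter (fun d => d ≤ j)).card : ℤ) := by
  have h := Finset.mem_Icc.mp (hD hj)
  rw [nu, if_neg (by omega), if_neg (by omega), if_pos hj]

lemma nu_memUs (hD : D ⊆ Finset.Icc 2 n) (hU : U = Finset.Icc 2 n \ D) {j : ℕ}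
    (hj : j ∈ U) (h2 : 2 * j ≤ n + 1) :
    nu n D U j = -(((U.filter (fun u => u ≤ j)).card : ℤ)) := by
  have hj' := hU ▸ hj
  obtain ⟨hj1, hj2⟩ := Finset.mem_sdiff.mp hj'
  have h := Finset.mem_Icc.mp hj1
  rw [nu, if_neg (by omega), if_neg (by omega), if_neg hj2, if_pos h2]

lemma nu_memUl (hD : D ⊆ Finset.Icc 2 n) (hU : U = Finset.Icc 2 n \ D) {j : ℕ}
    (hj : j ∈ U) (h2 : ¬ (2 * j ≤ n + 1)) :
    nu n D U j = (n : ℤ) + 1 - ((U.filter (fun u => u ≤ j)).card : ℤ) := by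
  have hj' := hU ▸ hj
  obtain ⟨hj1, hj2⟩ := Finset.mem_sdiff.mp hj'
  have h := Finset.mem_Icc.mp hj1
  rw [nu, if_neg (by omega), if_neg (by omega), if_neg hj2, if_neg h2]

lemma hUsub (hU : U = Finset.Icc 2 n \ D) : U ⊆ Finset.Icc 2 n := by
  rw [hU]; exact Finset.sdiff_subset

lemma cardU (hn : 1 ≤ n) (hD : D ⊆ Finset.Icc 2 n) (hU : U = Finset.Icc 2 n \ D) :
    D.card + U.card = n - 1 := by
  have h1 : U.card = (Finset.Icc 2 n).card - D.card := by rw [hU, Finset.card_sdiff_of_subset hD]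
  have h2 := Finset.card_le_card hD
  rw [Nat.card_Icc] at h1 h2
  omega

lemma filter_card_lt {S : Finset ℕ} {i j : ℕ} (hj : j ∈ S) (hij : i < j) :
    (S.filter (fun x => x ≤ i)).card < (S.filter (fun x => x ≤ j)).card := by
  apply Finset.card_lt_card
  rw [Finset.ssubset_iff_of_subset]
  · exact ⟨j, Finset.mem_filter.mpr ⟨hj, le_refl j⟩, by simp; omega⟩
  · intro x hx
    obtain ⟨h1, h2⟩ := Finset.mem_filter.mp hx
    exact Finset.mem_filter.mpr ⟨h1, by omega⟩

lemma filter_card_mono {S : Finset ℕ} {i j : ℕ} (hij : i ≤ j) :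
    (S.filter (fun x => x ≤ i)).card ≤ (S.filter (fun x => x ≤ j)).card := by
  apply Finset.card_le_card
  intro x hx
  obtain ⟨h1, h2⟩ := Finset.mem_filter.mp hx
  exact Finset.mem_filter.mpr ⟨h1, by omega⟩

lemma classify (hD : D ⊆ Finset.Icc 2 n) (hU : U = Finset.Icc 2 n \ D) {j : ℕ}
    (hj1 : 1 ≤ j) (hj2 : j ≤ n + 1) :
    j = 1 ∨ j = n + 1 ∨ j ∈ D ∨ j ∈ U := by
  by_cases h1 : j = 1
  · tauto
  by_cases h2 : j = n + 1
  · tauto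
  by_cases hd : j ∈ D
  · tauto
  refine Or.inr (Or.inr (Or.inr ?_))
  rw [hU, Finset.mem_sdiff]
  exact ⟨Finset.mem_Icc.mpr ⟨by omega, by omega⟩, hd⟩

lemma nuD_bounds (hD : D ⊆ Finset.Icc 2 n) {j : ℕ} (hj : j ∈ D) :
    1 ≤ nu n D U j ∧ nu n D U j ≤ (D.card : ℤ) := by
  rw [nu_memD hD hj]
  constructor
  · have : 0 < (D.filter (fun d => d ≤ j)).card :=
      Finset.card_pos.mpr ⟨j, Finset.mem_filter.mpr ⟨hj, le_refl j⟩⟩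
    exact_mod_cast this
  · exact_mod_cast Finset.card_filter_le D _

lemma nuUs_bounds (hD : D ⊆ Finset.Icc 2 n) (hU : U = Finset.Icc 2 n \ D) {j : ℕ}
    (hj : j ∈ U) (h2 : 2 * j ≤ n + 1) : nu n D U j ≤ -1 := by
  rw [nu_memUs hD hU hj h2]
  have : 0 < (U.filter (fun u => u ≤ j)).card :=
    Finset.card_pos.mpr ⟨j, Finset.mem_filter.mpr ⟨hj, le_refl j⟩⟩
  have : (1 : ℤ) ≤ ((U.filter (fun u => u ≤ j)).card : ℤ) := by exact_mod_cast this
  omega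

lemma nuUl_bounds (hn : 1 ≤ n) (hD : D ⊆ Finset.Icc 2 n) (hU : U = Finset.Icc 2 n \ D)
    {j : ℕ} (hj : j ∈ U) (h2 : ¬ (2 * j ≤ n + 1)) :
    (D.card : ℤ) + 2 ≤ nu n D U j ∧ nu n D U j ≤ n := by
  rw [nu_memUl hD hU hj h2]
  have hc1 : 0 < (U.filter (fun u => u ≤ j)).card :=
    Finset.card_pos.mpr ⟨j, Finset.mem_filter.mpr ⟨hj, le_refl j⟩⟩
  have hc2 : (U.filter (fun u => u ≤ j)).card ≤ U.card := Finset.card_filter_le U _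
  have hcU := cardU hn hD hU
  have h2' := Finset.card_le_card hD
  rw [Nat.card_Icc] at h2'
  constructor <;> push_cast <;> omega

lemma nu_injOn (hn : 1 ≤ n) (hD : D ⊆ Finset.Icc 2 n) (hU : U = Finset.Icc 2 n \ D)
    {i j : ℕ} (hi1 : 1 ≤ i) (hi2 : i ≤ n + 1) (hj1 : 1 ≤ j) (hj2 : j ≤ n + 1)
    (hij : nu n D U i = nu n D U j) : i = j := by
  have hr : (0 : ℤ) ≤ (D.card : ℤ) := Int.natCast_nonneg _
  rcases classify hD hU hi1 hi2 with rfl | rfl | hiD | hiU <;>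
    rcases classify hD hU hj1 hj2 with rfl | rfl | hjD | hjU
  · rfl
  · rw [nu_one, nu_top hn] at hij; omega
  · rw [nu_one] at hij; have := nuD_bounds (U := U) hD hjD; omega
  · rw [nu_one] at hij
    by_cases h2 : 2 * j ≤ n + 1
    · have := nuUs_bounds hD hU hjU h2; omega
    · have := (nuUl_bounds hn hD hU hjU h2).1; omega
  · rw [nu_one, nu_top hn] at hij; omega
  · rfl
  · rw [nu_top hn] at hij; have := nuD_bounds (U := U) hD hjD; omega
  · rw [nu_top hn] at hij
    by_cases h2 : 2 * j ≤ n + 1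
    · have := nuUs_bounds hD hU hjU h2; omega
    · have := (nuUl_bounds hn hD hU hjU h2).1; omega
  · rw [nu_one] at hij; have := nuD_bounds (U := U) hD hiD; omega
  · rw [nu_top hn] at hij; have := nuD_bounds (U := U) hD hiD; omega
  · rcases lt_trichotomy i j with h | h | h
    · exfalso
      have := filter_card_lt hjD h
      rw [nu_memD hD hiD, nu_memD hD hjD] at hij
      omega
    · exact h
    · exfalso
      have := filter_card_lt hiD h
      rw [nu_memD hD hiD, nu_memD hD hjD] at hij
      omega
  · have hi' := nuD_bounds (U := U) hD hiD
    by_cases h2 : 2 * j ≤ n + 1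
    · have := nuUs_bounds hD hU hjU h2; omega
    · have := (nuUl_bounds hn hD hU hjU h2).1; omega
  · by_cases h2 : 2 * i ≤ n + 1
    · have := nuUs_bounds hD hU hiU h2; rw [nu_one] at hij; omega
    · have := (nuUl_bounds hn hD hU hiU h2).1; rw [nu_one] at hij; omega
  · by_cases h2 : 2 * i ≤ n + 1
    · have := nuUs_bounds hD hU hiU h2; rw [nu_top hn] at hij; omega
    · have := (nuUl_bounds hn hD hU hiU h2).1; rw [nu_top hn] at hij; omega
  · have hj' := nuD_bounds (U := U) hD hjD
    by_cases h2 : 2 * i ≤ n + 1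
    · have := nuUs_bounds hD hU hiU h2; omega
    · have := (nuUl_bounds hn hD hU hiU h2).1; omega
  · by_cases h2i : 2 * i ≤ n + 1 <;> by_cases h2j : 2 * j ≤ n + 1
    · rcases lt_trichotomy i j with h | h | h
      · exfalso
        have := filter_card_lt hjU h
        rw [nu_memUs hD hU hiU h2i, nu_memUs hD hU hjU h2j] at hij
        omega
      · exact h
      · exfalso
        have := filter_card_lt hiU h
        rw [nu_memUs hD hU hiU h2i, nu_memUs hD hU hjU h2j] at hij
        omega
    · have h1 := nuUs_bounds hD hU hiU h2i
      have h2 := (nuUl_bounds hn hD hU hjU h2j).1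
      omega
    · have h1 := nuUs_bounds hD hU hjU h2j
      have h2 := (nuUl_bounds hn hD hU hiU h2i).1
      omega
    · rcases lt_trichotomy i j with h | h | h
      · exfalso
        have := filter_card_lt hjU h
        rw [nu_memUl hD hU hiU h2i, nu_memUl hD hU hjU h2j] at hij
        omega
      · exact h
      · exfalso
        have := filter_card_lt hiU h
        rw [nu_memUl hD hU hiU h2i, nu_memUl hD hU hjU h2j] at hij
        omega

lemma count_interval (a z : ℤ) (y : ℕ) (hy : 1 ≤ y) :
    ((Finset.Ico a (a + (y : ℤ))).filter (fun m => m ≡ z [ZMOD (y : ℤ)])).card = 1 := by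
  have hy0 : (0 : ℤ) < (y : ℤ) := by exact_mod_cast hy
  rw [Finset.card_eq_one]
  refine ⟨a + (z - a) % (y : ℤ), ?_⟩
  ext m
  rw [Finset.mem_filter, Finset.mem_Ico, Finset.mem_singleton]; simp only [Int.ModEq]
  constructor
  · rintro ⟨⟨h1, h2⟩, h3⟩
    have e1 : (m - a) % (y : ℤ) = m - a := Int.emod_eq_of_lt (by omega) (by omega)
    have e2 : (m - a) % (y : ℤ) = (z - a) % (y : ℤ) := Int.ModEq.sub_right a h3
    omega
  · rintro rfl
    have h0 : 0 ≤ (z - a) % (y : ℤ) := Int.emod_nonneg _ (by omega)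
    have h1 : (z - a) % (y : ℤ) < (y : ℤ) := Int.emod_lt_of_pos _ hy0
    refine ⟨⟨by omega, by omega⟩, ?_⟩
    have e1 : (a + (z - a) % (y : ℤ)) % (y : ℤ) = (a + (z - a)) % (y : ℤ) := by
      conv_rhs => rw [Int.add_emod]
      rw [Int.add_emod, Int.emod_emod_of_dvd _ dvd_rfl]
    rw [e1]
    congr 1
    ring

lemma card_filter_modeq (hn : 1 ≤ n) (hD : D ⊆ Finset.Icc 2 n)
    (hU : U = Finset.Icc 2 n \ D) {y : ℕ} (hy : 1 ≤ y) {B : Finset ℕ}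
    (hB : B ⊆ Finset.Icc 1 (n + 1)) (hcard : B.card = y)
    (hwin : ∃ a : ℤ, ∀ j ∈ B, a ≤ nu n D U j ∧ nu n D U j < a + (y : ℤ)) (z : ℤ) :
    (B.filter (fun j => nu n D U j ≡ z [ZMOD (y : ℤ)])).card = 1 := by
  obtain ⟨a, ha⟩ := hwin
  have hinj : Set.InjOn (nu n D U) ↑B := by
    intro i hi j hj hij
    have hi' := Finset.mem_Icc.mp (hB hi)
    have hj' := Finset.mem_Icc.mp (hB hj)
    exact nu_injOn hn hD hU hi'.1 hi'.2 hj'.1 hj'.2 hij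
  have himg : B.image (nu n D U) = Finset.Ico a (a + (y : ℤ)) := by
    apply Finset.eq_of_subset_of_card_le
    · intro m hm
      obtain ⟨j, hj, rfl⟩ := Finset.mem_image.mp hm
      exact Finset.mem_Ico.mpr ⟨(ha j hj).1, (ha j hj).2⟩
    · rw [Finset.card_image_of_injOn hinj, hcard, Int.card_Ico]
      have : a + (y : ℤ) - a = (y : ℤ) := by ring
      rw [this, Int.toNat_natCast]
  have h1 : ((B.filter (fun j => nu n D U j ≡ z [ZMOD (y : ℤ)])).image (nu n D U)).card
      = (B.filter (fun j => nu n D U j ≡ z [ZMOD (y : ℤ)])).card :=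
    Finset.card_image_of_injOn (hinj.mono (by exact_mod_cast Finset.filter_subset _ B))
  have h2 : Finset.image (nu n D U) (B.filter (fun j => nu n D U j ≡ z [ZMOD (y : ℤ)]))
      = (B.image (nu n D U)).filter (fun m => m ≡ z [ZMOD (y : ℤ)]) :=
    (Finset.filter_image (p := fun m => m ≡ z [ZMOD (y : ℤ)]) (f := nu n D U) (s := B)).symm
  rw [← h1, h2, himg, count_interval a z y hy]

lemma window (hn : 1 ≤ n) (hD : D ⊆ Finset.Icc 2 n) (hU : U = Finset.Icc 2 n \ D)
    {y : ℕ} (hy : 2 ≤ y) (hy' : 2 * y ≤ n + 1 ∨ (2 * y = n + 2 ∧ y ∈ D)) {B : Finset ℕ}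
    (hB : B ⊆ Finset.Icc 1 (n + 1)) (hcard : B.card = y)
    (hH2 : ∀ u ∈ B, u ∈ U → Finset.Icc 1 u ⊆ B ∨ Finset.Icc u (n + 1) ⊆ B)
    (hH3 : ∀ d ∈ D, d ∉ B → ∀ b ∈ B, b < d → ∀ b' ∈ B, d < b' → False) :
    ∃ a : ℤ, ∀ j ∈ B, a ≤ nu n D U j ∧ nu n D U j < a + (y : ℤ) := by
  classical
  have hUD : ∀ x, x ∈ U → x ∉ D := by
    intro x hx
    exact (Finset.mem_sdiff.mp (hU ▸ hx)).2
  have hUsub' : U ⊆ Finset.Icc 2 n := hUsub hU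
  have hy2 : 2 * y ≤ n + 2 := by rcases hy' with h | h <;> omega
  -- small elements of U in B pull down an initial segment
  have hPs : ∀ u ∈ B, u ∈ U → 2 * u ≤ n + 1 → Finset.Icc 1 u ⊆ B := by
    intro u huB huU h2
    rcases hH2 u huB huU with h | h
    · exact h
    · exfalso
      have hc := Finset.card_le_card h
      rw [Nat.card_Icc, hcard] at hc
      have hu2 := Finset.mem_Icc.mp (hUsub' huU)
      omega
  have hPl : ∀ u ∈ B, u ∈ U → n + 1 < 2 * u → Finset.Icc u (n + 1) ⊆ B := by
    intro u huB huU h2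
    rcases hH2 u huB huU with h | h
    · exfalso
      have hc := Finset.card_le_card h
      rw [Nat.card_Icc, hcard] at hc
      have hu_eq : u = y := by omega
      rcases hy' with h' | h'
      · omega
      · exact hUD u huU (hu_eq ▸ h'.2)
    · exact h
  set SU := B.filter (fun u => u ∈ U ∧ 2 * u ≤ n + 1) with hSUdef
  set LU := B.filter (fun u => u ∈ U ∧ n + 1 < 2 * u) with hLUdef
  set q := SU.card with hqdef
  set q' := LU.card with hq'def
  have hSUB : SU ⊆ B := Finset.filter_subset _ _
  have hLUB : LU ⊆ B := Finset.filter_subset _ _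
  have hSU_U : ∀ x ∈ SU, x ∈ U := fun x hx => (Finset.mem_filter.mp hx).2.1
  have hLU_U : ∀ x ∈ LU, x ∈ U := fun x hx => (Finset.mem_filter.mp hx).2.1
  have h1U : (1 : ℕ) ∉ U := by
    intro h
    have := Finset.mem_Icc.mp (hUsub' h); omega
  have h1D : (1 : ℕ) ∉ D := by
    intro h
    have := Finset.mem_Icc.mp (hD h); omega
  have hn1U : n + 1 ∉ U := by
    intro h
    have := Finset.mem_Icc.mp (hUsub' h); omega
  have hn1D : n + 1 ∉ D := by
    intro h
    have := Finset.mem_Icc.mp (hD h); omega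
  -- fact (a)
  have hfa : ∀ j ∈ B, j ∈ U → 2 * j ≤ n + 1 → (U.filter (fun u => u ≤ j)).card ≤ q := by
    intro j hjB hjU h2
    apply Finset.card_le_card
    intro x hx
    obtain ⟨hxU, hxj⟩ := Finset.mem_filter.mp hx
    have hx2 := Finset.mem_Icc.mp (hUsub' hxU)
    exact Finset.mem_filter.mpr
      ⟨hPs j hjB hjU h2 (Finset.mem_Icc.mpr ⟨by omega, hxj⟩), hxU, by omega⟩
  -- fact (b)
  have hfb : ∀ j ∈ B, j ∈ U → n + 1 < 2 * j → nu n D U j ≤ (D.card : ℤ) + 1 + (q' : ℤ) := by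
    intro j hjB hjU h2
    have hsub : U.filter (fun u => ¬ u ≤ j) ⊆ LU.erase j := by
      intro x hx
      obtain ⟨hxU, hxj⟩ := Finset.mem_filter.mp hx
      have hx2 := Finset.mem_Icc.mp (hUsub' hxU)
      refine Finset.mem_erase.mpr ⟨by omega, Finset.mem_filter.mpr
        ⟨hPl j hjB hjU h2 (Finset.mem_Icc.mpr ⟨by omega, by omega⟩), hxU, by omega⟩⟩
    have hjLU : j ∈ LU := Finset.mem_filter.mpr ⟨hjB, hjU, h2⟩
    have h1 := Finset.card_le_card hsub
    rw [Finset.card_erase_of_mem hjLU] at h1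
    have hq'pos : 1 ≤ q' := Finset.card_pos.mpr ⟨j, hjLU⟩
    have h2' := Finset.card_filter_add_card_filter_not
      (s := U) (p := fun u => u ≤ j)
    have hcU := cardU hn hD hU
    rw [nu_memUl hD hU hjU (by omega)]
    push_cast
    omega
  have hq'y : q' ≤ y := hcard ▸ Finset.card_le_card hLUB
  by_cases h1B : (1 : ℕ) ∈ B <;> by_cases hn1B : n + 1 ∈ B
  · -- Case D : 1 ∈ B, n+1 ∈ B
    have hDsub : D ⊆ B := by
      intro d hd
      by_contra hdB
      have hd2 := Finset.mem_Icc.mp (hD hd)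
      exact hH3 d hd hdB 1 h1B (by omega) (n + 1) hn1B (by omega)
    have hbig : q + q' + D.card + 2 ≤ y := by
      have hsub : (SU ∪ (LU ∪ (D ∪ {1, n + 1})) : Finset ℕ) ⊆ B := by
        intro x hx
        rcases Finset.mem_union.mp hx with h | h
        · exact hSUB h
        rcases Finset.mem_union.mp h with h | h
        · exact hLUB h
        rcases Finset.mem_union.mp h with h | h
        · exact hDsub h
        rcases Finset.mem_insert.mp h with rfl | h
        · exact h1B
        · rw [Finset.mem_singleton.mp h]; exact hn1B
      have hc1 : ({1, n + 1} : Finset ℕ).card = 2 := by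
        rw [Finset.card_insert_of_notMem (by simp; omega), Finset.card_singleton]
      have hd1 : Disjoint (D : Finset ℕ) ({1, n + 1} : Finset ℕ) := by
        rw [Finset.disjoint_right]
        intro x hx
        rcases Finset.mem_insert.mp hx with rfl | hx
        · exact h1D
        · rw [Finset.mem_singleton.mp hx]; exact hn1D
      have hd2 : Disjoint LU (D ∪ {1, n + 1} : Finset ℕ) := by
        rw [Finset.disjoint_left]
        intro x hx hx'
        have hxU := hLU_U x hx
        rcases Finset.mem_union.mp hx' with h | h
        · exact hUD x hxU h
        rcases Finset.mem_insert.mp h with rfl | h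
        · exact h1U hxU
        · rw [Finset.mem_singleton.mp h] at hxU; exact hn1U hxU
      have hd3 : Disjoint SU (LU ∪ (D ∪ {1, n + 1}) : Finset ℕ) := by
        rw [Finset.disjoint_left]
        intro x hx hx'
        have hxU := hSU_U x hx
        have hxs := (Finset.mem_filter.mp hx).2.2
        rcases Finset.mem_union.mp hx' with h | h
        · exact absurd (Finset.mem_filter.mp h).2.2 (by omega)
        rcases Finset.mem_union.mp h with h | h
        · exact hUD x hxU h
        rcases Finset.mem_insert.mp h with rfl | h
        · exact h1U hxU
        · rw [Finset.mem_singleton.mp h] at hxU; exact hn1U hxU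
      have := Finset.card_le_card hsub
      rw [Finset.card_union_of_disjoint hd3, Finset.card_union_of_disjoint hd2,
        Finset.card_union_of_disjoint hd1, hc1, hcard] at this
      omega
    refine ⟨-(q : ℤ), ?_⟩
    intro j hjB
    have hj' := Finset.mem_Icc.mp (hB hjB)
    rcases classify hD hU hj'.1 hj'.2 with rfl | rfl | hjD | hjU
    · rw [nu_one]; constructor <;> push_cast <;> omega
    · rw [nu_top hn]; constructor <;> push_cast <;> omega
    · have := nuD_bounds (U := U) hD hjD
      constructor <;> push_cast <;> omega
    · by_cases h2 : 2 * j ≤ n + 1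
      · have hc := hfa j hjB hjU h2
        have hpos : 0 < (U.filter (fun u => u ≤ j)).card :=
          Finset.card_pos.mpr ⟨j, Finset.mem_filter.mpr ⟨hjU, le_refl j⟩⟩
        rw [nu_memUs hD hU hjU h2]
        constructor <;> push_cast <;> omega
      · have hub := hfb j hjB hjU (by omega)
        have hlb := (nuUl_bounds hn hD hU hjU h2).1
        constructor <;> push_cast at * <;> omega
  · -- Case B : 1 ∈ B, n+1 ∉ B
    have hnoL : ∀ j ∈ B, j ∈ U → 2 * j ≤ n + 1 := by
      intro j hjB hjU
      by_contra h2
      have hj2 := Finset.mem_Icc.mp (hUsub' hjU)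
      exact hn1B (hPl j hjB hjU (by omega) (Finset.mem_Icc.mpr ⟨by omega, le_refl _⟩))
    have h1SU : (1 : ℕ) ∉ SU := fun h => h1U (hSU_U 1 h)
    have hq1 : q + 1 ≤ y := by
      have hsub : insert 1 SU ⊆ B := by
        intro x hx
        rcases Finset.mem_insert.mp hx with rfl | hx
        · exact h1B
        · exact hSUB hx
      have := Finset.card_le_card hsub
      rw [Finset.card_insert_of_notMem h1SU, hcard] at this
      omega
    have hDin : ∀ j ∈ B, j ∈ D → D.filter (fun d => d ≤ j) ⊆ B := by
      intro j hjB hjD d hd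
      obtain ⟨hdD, hdj⟩ := Finset.mem_filter.mp hd
      by_contra hdB
      have hd2 := Finset.mem_Icc.mp (hD hdD)
      have hdj' : d ≠ j := fun h => hdB (h ▸ hjB)
      exact hH3 d hdD hdB 1 h1B (by omega) j hjB (by omega)
    refine ⟨-(q : ℤ), ?_⟩
    intro j hjB
    have hj' := Finset.mem_Icc.mp (hB hjB)
    rcases classify hD hU hj'.1 hj'.2 with rfl | rfl | hjD | hjU
    · rw [nu_one]; constructor <;> push_cast <;> omega
    · exact absurd hjB hn1B
    · have hm := nuD_bounds (U := U) hD hjD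
      have hsub : insert 1 (SU ∪ D.filter (fun d => d ≤ j)) ⊆ B := by
        intro x hx
        rcases Finset.mem_insert.mp hx with rfl | hx
        · exact h1B
        rcases Finset.mem_union.mp hx with h | h
        · exact hSUB h
        · exact hDin j hjB hjD h
      have hdisj : Disjoint SU (D.filter (fun d => d ≤ j)) := by
        rw [Finset.disjoint_left]
        intro x hx hx'
        exact hUD x (hSU_U x hx) (Finset.mem_filter.mp hx').1
      have hnotmem : (1 : ℕ) ∉ SU ∪ D.filter (fun d => d ≤ j) := by
        intro h
        rcases Finset.mem_union.mp h with h | h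
        · exact h1SU h
        · exact h1D (Finset.mem_filter.mp h).1
      have hcc := Finset.card_le_card hsub
      rw [Finset.card_insert_of_notMem hnotmem, Finset.card_union_of_disjoint hdisj,
        hcard] at hcc
      rw [nu_memD hD hjD]
      rw [nu_memD hD hjD] at hm
      constructor <;> push_cast at * <;> omega
    · have h2 := hnoL j hjB hjU
      have hc := hfa j hjB hjU h2
      have hpos : 0 < (U.filter (fun u => u ≤ j)).card :=
        Finset.card_pos.mpr ⟨j, Finset.mem_filter.mpr ⟨hjU, le_refl j⟩⟩
      rw [nu_memUs hD hU hjU h2]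
      constructor <;> push_cast <;> omega
  · -- Case C : 1 ∉ B, n+1 ∈ B
    have hnoS : ∀ j ∈ B, j ∈ U → n + 1 < 2 * j := by
      intro j hjB hjU
      by_contra h2
      have hj2 := Finset.mem_Icc.mp (hUsub' hjU)
      exact h1B (hPs j hjB hjU (by omega) (Finset.mem_Icc.mpr ⟨le_refl _, by omega⟩))
    have hn1LU : n + 1 ∉ LU := fun h => hn1U (hLU_U _ h)
    have hq'1 : q' + 1 ≤ y := by
      have hsub : insert (n + 1) LU ⊆ B := by
        intro x hx
        rcases Finset.mem_insert.mp hx with rfl | hx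
        · exact hn1B
        · exact hLUB hx
      have := Finset.card_le_card hsub
      rw [Finset.card_insert_of_notMem hn1LU, hcard] at this
      omega
    have hDout : ∀ j ∈ B, j ∈ D → D.filter (fun d => ¬ d ≤ j) ⊆ B := by
      intro j hjB hjD d hd
      obtain ⟨hdD, hdj⟩ := Finset.mem_filter.mp hd
      by_contra hdB
      have hd2 := Finset.mem_Icc.mp (hD hdD)
      exact hH3 d hdD hdB j hjB (by omega) (n + 1) hn1B (by omega)
    refine ⟨(D.card : ℤ) + 2 + (q' : ℤ) - (y : ℤ), ?_⟩
    intro j hjB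
    have hj' := Finset.mem_Icc.mp (hB hjB)
    rcases classify hD hU hj'.1 hj'.2 with rfl | rfl | hjD | hjU
    · exact absurd hjB h1B
    · rw [nu_top hn]; constructor <;> push_cast <;> omega
    · have hm := nuD_bounds (U := U) hD hjD
      have hsub : insert j (insert (n + 1) (LU ∪ D.filter (fun d => ¬ d ≤ j))) ⊆ B := by
        intro x hx
        rcases Finset.mem_insert.mp hx with rfl | hx
        · exact hjB
        rcases Finset.mem_insert.mp hx with rfl | hx
        · exact hn1B
        rcases Finset.mem_union.mp hx with h | h
        · exact hLUB h
        · exact hDout j hjB hjD h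
      have hdisj : Disjoint LU (D.filter (fun d => ¬ d ≤ j)) := by
        rw [Finset.disjoint_left]
        intro x hx hx'
        exact hUD x (hLU_U x hx) (Finset.mem_filter.mp hx').1
      have hnm1 : n + 1 ∉ LU ∪ D.filter (fun d => ¬ d ≤ j) := by
        intro h
        rcases Finset.mem_union.mp h with h | h
        · exact hn1LU h
        · exact hn1D (Finset.mem_filter.mp h).1
      have hj2 := Finset.mem_Icc.mp (hD hjD)
      have hnmj : j ∉ insert (n + 1) (LU ∪ D.filter (fun d => ¬ d ≤ j)) := by
        intro h
        rcases Finset.mem_insert.mp h with h | h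
        · omega
        rcases Finset.mem_union.mp h with h | h
        · exact hUD j (hLU_U _ h) hjD
        · exact absurd (le_refl j) (Finset.mem_filter.mp h).2
      have hcc := Finset.card_le_card hsub
      rw [Finset.card_insert_of_notMem hnmj, Finset.card_insert_of_notMem hnm1,
        Finset.card_union_of_disjoint hdisj, hcard] at hcc
      have hpart := Finset.card_filter_add_card_filter_not
        (s := D) (p := fun d => d ≤ j)
      rw [nu_memD hD hjD]
      rw [nu_memD hD hjD] at hm
      constructor <;> push_cast at * <;> omega
    · have h2 := hnoS j hjB hjU
      have hub := hfb j hjB hjU h2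
      have hlb := (nuUl_bounds hn hD hU hjU (by omega)).1
      constructor <;> push_cast at * <;> omega
  · -- Case A : 1 ∉ B, n+1 ∉ B
    have hBD : ∀ j ∈ B, j ∈ D := by
      intro j hjB
      have hj' := Finset.mem_Icc.mp (hB hjB)
      rcases classify hD hU hj'.1 hj'.2 with rfl | rfl | h | hU' 
      · exact absurd hjB h1B
      · exact absurd hjB hn1B
      · exact h
      · exfalso
        have hj2 := Finset.mem_Icc.mp (hUsub' hU')
        by_cases h2 : 2 * j ≤ n + 1
        · exact h1B (hPs j hjB hU' h2 (Finset.mem_Icc.mpr ⟨le_refl _, by omega⟩))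
        · exact hn1B (hPl j hjB hU' (by omega) (Finset.mem_Icc.mpr ⟨by omega, le_refl _⟩))
    have hne : B.Nonempty := Finset.card_pos.mp (by omega)
    set j₀ := B.min' hne with hj₀def
    have hj₀B := B.min'_mem hne
    have hj₀D := hBD j₀ hj₀B
    refine ⟨((D.filter (fun d => d ≤ j₀)).card : ℤ), ?_⟩
    intro j hjB
    have hjD := hBD j hjB
    have hj0le : j₀ ≤ j := B.min'_le j hjB
    rw [nu_memD hD hjD]
    have hmono : D.filter (fun d => d ≤ j₀) ⊆ D.filter (fun d => d ≤ j) := by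
      intro x hx
      obtain ⟨hx1, hx2⟩ := Finset.mem_filter.mp hx
      exact Finset.mem_filter.mpr ⟨hx1, by omega⟩
    constructor
    · exact_mod_cast Finset.card_le_card hmono
    · have hsdiff : D.filter (fun d => d ≤ j) \ D.filter (fun d => d ≤ j₀) ⊆ B.erase j₀ := by
        intro d hd
        obtain ⟨hd1, hd2⟩ := Finset.mem_sdiff.mp hd
        obtain ⟨hdD, hdj⟩ := Finset.mem_filter.mp hd1
        have hdj₀ : ¬ d ≤ j₀ := fun h => hd2 (Finset.mem_filter.mpr ⟨hdD, h⟩)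
        have hdB : d ∈ B := by
          by_contra hdB
          have hdj' : d ≠ j := fun h => hdB (h ▸ hjB)
          exact hH3 d hdD hdB j₀ hj₀B (by omega) j hjB (by omega)
        exact Finset.mem_erase.mpr ⟨by omega, hdB⟩
      have hc1 := Finset.card_le_card hsdiff
      rw [Finset.card_erase_of_mem hj₀B, hcard] at hc1
      have hc2 := Finset.card_sdiff_add_card_eq_card hmono
      push_cast
      omega

end S6aux

/-- Top sum relations: for `X ∈ Aff(c)`, `2 ≤ y` with `2y ≤ n+1` (or `2y = n+2`, `y ∈ D`),
and any integer `z`, the sum of the entries `X(i,j)` with `1 ≤ i ≤ y` over all columns `j`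
with `ν_c(j) ≡ z (mod y)` equals `1`. -/
theorem statement6 (n : ℕ) (hn : 1 ≤ n) (D U : Finset ℕ)
    (hD : D ⊆ Finset.Icc 2 n) (hU : U = Finset.Icc 2 n \ D)
    (X : ℕ → ℕ → ℝ) (hX : X ∈ affineSpan ℝ (cSingletonMatrices n D U))
    (y : ℕ) (hy : 2 ≤ y) (hy' : 2 * y ≤ n + 1 ∨ (2 * y = n + 2 ∧ y ∈ D)) (z : ℤ) :
    ∑ j ∈ (Finset.Icc 1 (n + 1)).filter (fun j => nu n D U j ≡ z [ZMOD (y : ℤ)]),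
      ∑ i ∈ Finset.Icc 1 y, X i j = 1 := by
  classical
  set F := (Finset.Icc 1 (n + 1)).filter (fun j => nu n D U j ≡ z [ZMOD (y : ℤ)]) with hF
  have hy2' : 2 * y ≤ n + 2 := by rcases hy' with h | h <;> omega
  refine affineSpan_induction
    (p := fun X : ℕ → ℕ → ℝ => ∑ j ∈ F, ∑ i ∈ Finset.Icc 1 y, X i j = 1) hX ?_ ?_
  · rintro X ⟨w, hfix, hsing, rfl⟩
    have hwmem : ∀ x ∈ Finset.Icc 1 (n + 1), w x ∈ Finset.Icc 1 (n + 1) := by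
      intro x hx
      by_contra h'
      have h1 := hfix (w x) h'
      have h2 : w x = x := w.injective h1
      rw [h2] at h'
      exact h' hx
    set B := (Finset.Icc 1 y).image (⇑w) with hBdef
    have hBsub : B ⊆ Finset.Icc 1 (n + 1) := by
      intro x hx
      obtain ⟨i, hi, rfl⟩ := Finset.mem_image.mp hx
      have hi' := Finset.mem_Icc.mp hi
      exact hwmem i (Finset.mem_Icc.mpr ⟨hi'.1, by omega⟩)
    have hBcard : B.card = y := by
      rw [hBdef, Finset.card_image_of_injective _ w.injective, Nat.card_Icc]
      omega
    have hpos : ∀ v, v ∈ Finset.Icc 1 (n + 1) → v ∉ B →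
        y < w.symm v ∧ w.symm v ≤ n + 1 := by
      intro v hv hvB
      have hsym : w (w.symm v) = v := w.apply_symm_apply v
      have hmem : w.symm v ∈ Finset.Icc 1 (n + 1) := by
        by_contra h'
        have h1 := hfix _ h'
        rw [hsym] at h1
        exact h' (h1 ▸ hv)
      have h1 := Finset.mem_Icc.mp hmem
      refine ⟨?_, h1.2⟩
      by_contra h'
      push_neg at h'
      exact hvB (Finset.mem_image.mpr ⟨w.symm v, Finset.mem_Icc.mpr ⟨h1.1, h'⟩, hsym⟩)
    have hH2 : ∀ u ∈ B, u ∈ U → Finset.Icc 1 u ⊆ B ∨ Finset.Icc u (n + 1) ⊆ B := by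
      intro u huB huU
      by_contra hcon
      push_neg at hcon
      obtain ⟨h2a, h2b⟩ := hcon
      rw [Finset.not_subset] at h2a h2b
      obtain ⟨v, hv, hvB⟩ := h2a
      obtain ⟨v', hv', hv'B⟩ := h2b
      have hu' := Finset.mem_Icc.mp (hBsub huB)
      have hvI := Finset.mem_Icc.mp hv
      have hv'I := Finset.mem_Icc.mp hv'
      have hvu : v ≠ u := fun h => hvB (h ▸ huB)
      have hv'u : v' ≠ u := fun h => hv'B (h ▸ huB)
      obtain ⟨i, hi, hwi⟩ := Finset.mem_image.mp huB
      have hi' := Finset.mem_Icc.mp hi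
      have hp := hpos v (Finset.mem_Icc.mpr ⟨hvI.1, by omega⟩) hvB
      have hp' := hpos v' (Finset.mem_Icc.mpr ⟨by omega, hv'I.2⟩) hv'B
      have hwp : w (w.symm v) = v := w.apply_symm_apply v
      have hwp' : w (w.symm v') = v' := w.apply_symm_apply v'
      have hpp' : w.symm v ≠ w.symm v' := by
        intro h
        rw [h, hwp'] at hwp
        omega
      rcases lt_or_gt_of_ne hpp' with h | h
      · have hc := (hsing i (w.symm v) (w.symm v') (by omega) (by omega) h (by omega)).2.2.2
        rw [hwi, hwp, hwp'] at hc
        exact hc ⟨by omega, by omega, huU⟩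
      · have hc := (hsing i (w.symm v') (w.symm v) (by omega) (by omega) h (by omega)).2.1
        rw [hwi, hwp, hwp'] at hc
        exact hc ⟨by omega, by omega, huU⟩
    have hH3 : ∀ d ∈ D, d ∉ B → ∀ b ∈ B, b < d → ∀ b' ∈ B, d < b' → False := by
      intro d hdD hdB b hbB hbd b' hb'B hdb'
      have hd' := Finset.mem_Icc.mp (hD hdD)
      have hp := hpos d (Finset.mem_Icc.mpr ⟨by omega, by omega⟩) hdB
      have hwk : w (w.symm d) = d := w.apply_symm_apply d
      obtain ⟨i, hi, hwi⟩ := Finset.mem_image.mp hbB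
      obtain ⟨i', hi', hwi'⟩ := Finset.mem_image.mp hb'B
      have hiI := Finset.mem_Icc.mp hi
      have hi'I := Finset.mem_Icc.mp hi'
      have hii' : i ≠ i' := by
        intro h
        rw [h, hwi'] at hwi
        omega
      rcases lt_or_gt_of_ne hii' with h | h
      · have hc := (hsing i i' (w.symm d) (by omega) h (by omega) (by omega)).2.2.1
        rw [hwi, hwi', hwk] at hc
        exact hc ⟨hbd, hdb', hdD⟩
      · have hc := (hsing i' i (w.symm d) (by omega) h (by omega) (by omega)).1
        rw [hwi, hwi', hwk] at hc
        exact hc ⟨hbd, hdb', hdD⟩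
    have hcount := S6aux.card_filter_modeq hn hD hU (by omega : 1 ≤ y) hBsub hBcard
      (S6aux.window hn hD hU hy hy' hBsub hBcard hH2 hH3) z
    show ∑ j ∈ F, ∑ i ∈ Finset.Icc 1 y, permMatrix (⇑w) i j = 1
    rw [Finset.sum_comm]
    have hswap : ∀ i, ∑ j ∈ F, permMatrix (⇑w) i j = if w i ∈ F then 1 else 0 := by
      intro i
      simp only [permMatrix]
      exact Finset.sum_ite_eq F (w i) fun _ => (1 : ℝ)
    rw [Finset.sum_congr rfl (fun i _ => hswap i), Finset.sum_boole]
    have himg : (B.filter (fun j => j ∈ F)).card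
        = ((Finset.Icc 1 y).filter (fun i => w i ∈ F)).card := by
      rw [hBdef, Finset.filter_image, Finset.card_image_of_injective _ w.injective]
    have hfin : (B.filter (fun j => j ∈ F)).card = 1 := by
      have he : B.filter (fun j => j ∈ F)
          = B.filter (fun j => nu n D U j ≡ z [ZMOD (y : ℤ)]) := by
        apply Finset.filter_congr
        intro j hjB
        simp only [hF, Finset.mem_filter]
        exact ⟨fun h => h.2, fun h => ⟨hBsub hjB, h⟩⟩
      rw [he, hcount]
    rw [← himg, hfin]
    norm_num
  · intro c u v x hu hv hx
    have hexp : ∀ j (i : ℕ),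
        (c • (u -ᵥ v) +ᵥ x) i j = c * (u i j - v i j) + x i j := by
      intro j i
      simp [vsub_eq_sub, vadd_eq_add, Pi.smul_apply, Pi.sub_apply, Pi.add_apply,
        smul_eq_mul]
    calc ∑ j ∈ F, ∑ i ∈ Finset.Icc 1 y, (c • (u -ᵥ v) +ᵥ x) i j
        = ∑ j ∈ F, ∑ i ∈ Finset.Icc 1 y, (c * (u i j - v i j) + x i j) := by
          exact Finset.sum_congr rfl fun j _ =>
            Finset.sum_congr rfl fun i _ => hexp j i
      _ = c * ((∑ j ∈ F, ∑ i ∈ Finset.Icc 1 y, u i j)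
            - ∑ j ∈ F, ∑ i ∈ Finset.Icc 1 y, v i j)
            + ∑ j ∈ F, ∑ i ∈ Finset.Icc 1 y, x i j := by
          simp only [Finset.sum_add_distrib, Finset.sum_sub_distrib, ← Finset.mul_sum]
      _ = 1 := by rw [hu, hv, hx]; ring
end

section
/- In the space of (n+1)×(n+1) real matrices, writing E_{i,j} for the matrix units, the following matrices are pairwise distinct and the whole collection is linearly independent: (a) the row-sum matrices R_i = ∑_{j=1}^{n+1} E_{i,j} for each 1 ≤ i ≤ n+1; (b) the column-sum matrices C_j = ∑_{i=1}^{n+1} E_{i,j} for each 2 ≤ j ≤ n+1; (c) the matrix units E_{i,j} for each position (i,j) in the zero set Z_c; (d) for each integer y with 2 ≤ y and 2y ≤ n+1 and each x ∈ {2,...,y}, the matrix T_{y,x} = ∑_j ∑_{i=1}^{y} E_{i,j}, where the outer sum is over all j ∈ {1,...,n+1} with ν_c(j) ≡ ν_c(x) (mod y); (e) for each integer y with 2 ≤ y and 2y ≤ n and each x ∈ {2,...,y}, the matrix B_{y,x} = ∑_j ∑_{i=n+2−y}^{n+1} E_{i,j}, where the outer sum is over all j ∈ {1,...,n+1} with ν_{c^{-1}}(j)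 ≡ ν_{c^{-1}}(x) (mod y). (These are exactly the coefficient matrices of the row and column relations, the zero relations, the top sum relations, and the bottom sum relations on Aff(c), with the ranges of y used in the paper's proof.) -/
def Eunit (i j : ℕ) : ℕ → ℕ → ℝ := fun a b => if a = i ∧ b = j then 1 else 0

def ZcF (n : ℕ) (D U : Finset ℕ) : Finset (ℕ × ℕ) :=
  (U.biUnion fun u => (Finset.Icc 1 (min (u - 1) (n + 1 - u))).image fun i => (i, u)) ∪
  (D.biUnion fun d => (Finset.Icc (max (d + 1) (n + 3 - d)) (n + 1)).image fun i => (i, d))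

abbrev RelIdx (n : ℕ) (D U : Finset ℕ) :=
  {i : ℕ // i ∈ Finset.Icc 1 (n + 1)} ⊕ {j : ℕ // j ∈ Finset.Icc 2 (n + 1)} ⊕
  {p : ℕ × ℕ // p ∈ ZcF n D U} ⊕
  {q : ℕ × ℕ // 2 ≤ q.1 ∧ 2 * q.1 ≤ n + 1 ∧ 2 ≤ q.2 ∧ q.2 ≤ q.1} ⊕
  {q : ℕ × ℕ // 2 ≤ q.1 ∧ 2 * q.1 ≤ n ∧ 2 ≤ q.2 ∧ q.2 ≤ q.1}

def relMat (n : ℕ) (D U : Finset ℕ) : RelIdx n D U → (ℕ → ℕ → ℝ)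
  | .inl ⟨i, _⟩ => ∑ j ∈ Finset.Icc 1 (n + 1), Eunit i j
  | .inr (.inl ⟨j, _⟩) => ∑ i ∈ Finset.Icc 1 (n + 1), Eunit i j
  | .inr (.inr (.inl ⟨p, _⟩)) => Eunit p.1 p.2
  | .inr (.inr (.inr (.inl ⟨q, _⟩))) =>
      ∑ j ∈ (Finset.Icc 1 (n + 1)).filter
          (fun j => nu n D U j ≡ nu n D U q.2 [ZMOD (q.1 : ℤ)]),
        ∑ i ∈ Finset.Icc 1 q.1, Eunit i j
  | .inr (.inr (.inr (.inr ⟨q, _⟩))) =>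
      ∑ j ∈ (Finset.Icc 1 (n + 1)).filter
          (fun j => nu n U D j ≡ nu n U D q.2 [ZMOD (q.1 : ℤ)]),
        ∑ i ∈ Finset.Icc (n + 2 - q.1) (n + 1), Eunit i j

/- ### auxiliary lemmas -/

lemma nu_one (n : ℕ) (D U : Finset ℕ) : nu n D U 1 = 0 := by simp [nu]

lemma nu_small (n : ℕ) (D U : Finset ℕ) {x : ℕ} (hx : 2 ≤ x) (h2x : 2 * x ≤ n + 1) :
    nu n D U x = if x ∈ D then ((D.filter (fun d => d ≤ x)).card : ℤ)
      else -(((U.filter (fun u => u ≤ x)).card : ℤ)) := by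
  unfold nu
  rw [if_neg (by omega), if_neg (by omega)]
  by_cases hxD : x ∈ D
  · simp [hxD]
  · simp [hxD, if_pos h2x]

lemma filter_card_pos {D : Finset ℕ} {t : ℕ} (ht : t ∈ D) :
    1 ≤ (D.filter (fun d => d ≤ t)).card :=
  Finset.card_pos.mpr ⟨t, by simp [ht]⟩

lemma filter_card_mono (D : Finset ℕ) {t t' : ℕ} (h : t ≤ t') :
    (D.filter (fun d => d ≤ t)).card ≤ (D.filter (fun d => d ≤ t')).card :=
  Finset.card_le_card (Finset.monotone_filter_right _ (fun d _ hd => le_trans hd h))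

lemma filter_card_lt {D : Finset ℕ} {t t' : ℕ} (h : t < t') (ht' : t' ∈ D) :
    (D.filter (fun d => d ≤ t)).card < (D.filter (fun d => d ≤ t')).card := by
  apply Finset.card_lt_card
  refine (Finset.ssubset_iff_of_subset
    (Finset.monotone_filter_right _ (fun d _ hd => le_trans hd h.le))).mpr ?_
  exact ⟨t', by simp [ht'], by simp [ht']; omega⟩

lemma not_dvd_of_bounds {y d : ℤ} (hy : 0 < y) (h1 : -y < d) (h2 : d < y) (h3 : d ≠ 0) :
    ¬ y ∣ d := by
  rintro ⟨k, rfl⟩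
  rcases lt_trichotomy k 0 with h | h | h
  · have : y * k ≤ y * (-1) := mul_le_mul_of_nonneg_left (by omega) hy.le
    simp at this; linarith
  · simp [h] at h3
  · have : y * 1 ≤ y * k := mul_le_mul_of_nonneg_left (by omega) hy.le
    simp at this; linarith

lemma nu_not_modEq (n : ℕ) (D U : Finset ℕ) (hD : D ⊆ Finset.Icc 2 n)
    (hU : U ⊆ Finset.Icc 2 n) (hdisj : ∀ j, j ∈ D → j ∉ U)
    (hunion : ∀ j, 2 ≤ j → j ≤ n → j ∈ D ∨ j ∈ U)
    {y x x' : ℕ} (hy2 : 2 ≤ y) (hyn : 2 * y ≤ n + 1)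
    (hx2 : 2 ≤ x) (hxy : x ≤ y) (hx'1 : 1 ≤ x') (hx'y : x' ≤ y) (hne : x ≠ x') :
    ¬ nu n D U x ≡ nu n D U x' [ZMOD (y : ℤ)] := by
  intro h
  have hd := h.dvd
  have hyn' : y ≤ n := by omega
  have hPQ : (D.filter (fun d => d ≤ y)).card + (U.filter (fun u => u ≤ y)).card = y - 1 := by
    have hdisj' : Disjoint (D.filter (fun d => d ≤ y)) (U.filter (fun u => u ≤ y)) := by
      rw [Finset.disjoint_left]
      intro j hj hj'
      simp only [Finset.mem_filter] at hj hj'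
      exact hdisj j hj.1 hj'.1
    have hun : (D.filter (fun d => d ≤ y)) ∪ (U.filter (fun u => u ≤ y)) = Finset.Icc 2 y := by
      ext j
      simp only [Finset.mem_union, Finset.mem_filter, Finset.mem_Icc]
      constructor
      · rintro (⟨hj, hjy⟩ | ⟨hj, hjy⟩)
        · have := hD hj; simp [Finset.mem_Icc] at this; omega
        · have := hU hj; simp [Finset.mem_Icc] at this; omega
      · rintro ⟨h2, hy'⟩
        rcases hunion j h2 (by omega) with hj | hj
        · exact Or.inl ⟨hj, hy'⟩
        · exact Or.inr ⟨hj, hy'⟩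
    have := Finset.card_union_of_disjoint hdisj'
    rw [hun, Nat.card_Icc] at this
    omega
  have hxn : x ∈ D ∨ x ∈ U := hunion x hx2 (by omega)
  have hb : ∀ t, t ≤ y → t ∈ D →
      1 ≤ (D.filter (fun d => d ≤ t)).card ∧
      (D.filter (fun d => d ≤ t)).card ≤ (D.filter (fun d => d ≤ y)).card :=
    fun t hty ht => ⟨filter_card_pos ht, filter_card_mono D hty⟩
  have hbU : ∀ t, t ≤ y → t ∈ U →
      1 ≤ (U.filter (fun u => u ≤ t)).card ∧
      (U.filter (fun u => u ≤ t)).card ≤ (U.filter (fun u => u ≤ y)).card :=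
    fun t hty ht => ⟨filter_card_pos ht, filter_card_mono U hty⟩
  have hy0 : (0 : ℤ) < (y : ℤ) := by exact_mod_cast (by omega : 0 < y)
  rw [nu_small n D U hx2 (by omega)] at hd
  rcases eq_or_lt_of_le hx'1 with h1 | hx'2
  · rw [← h1, nu_one] at hd
    rcases hxn with hx | hx
    · rw [if_pos hx] at hd
      obtain ⟨c1, c2⟩ := hb x hxy hx
      refine not_dvd_of_bounds hy0 ?_ ?_ ?_ hd <;> push_cast <;> omega
    · rw [if_neg (fun hc => hdisj x hc hx)] at hd
      obtain ⟨c1, c2⟩ := hbU x hxy hx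
      refine not_dvd_of_bounds hy0 ?_ ?_ ?_ hd <;> push_cast <;> omega
  · have hx'2' : 2 ≤ x' := hx'2
    rw [nu_small n D U hx'2' (by omega)] at hd
    have hx'n : x' ∈ D ∨ x' ∈ U := hunion x' hx'2' (by omega)
    rcases hxn with hx | hx <;> rcases hx'n with hx' | hx'
    · rw [if_pos hx, if_pos hx'] at hd
      obtain ⟨c1, c2⟩ := hb x hxy hx
      obtain ⟨c3, c4⟩ := hb x' hx'y hx'
      have hne' : (D.filter (fun d => d ≤ x)).card ≠ (D.filter (fun d => d ≤ x')).card := by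
        rcases lt_or_gt_of_ne hne with hlt | hgt
        · exact Nat.ne_of_lt (filter_card_lt hlt hx')
        · exact (Nat.ne_of_lt (filter_card_lt hgt hx)).symm
      refine not_dvd_of_bounds hy0 ?_ ?_ ?_ hd <;> push_cast <;> omega
    · rw [if_pos hx, if_neg (fun hc => hdisj x' hc hx')] at hd
      obtain ⟨c1, c2⟩ := hb x hxy hx
      obtain ⟨c3, c4⟩ := hbU x' hx'y hx'
      refine not_dvd_of_bounds hy0 ?_ ?_ ?_ hd <;> push_cast <;> omega
    · rw [if_neg (fun hc => hdisj x hc hx), if_pos hx'] at hd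
      obtain ⟨c1, c2⟩ := hbU x hxy hx
      obtain ⟨c3, c4⟩ := hb x' hx'y hx'
      refine not_dvd_of_bounds hy0 ?_ ?_ ?_ hd <;> push_cast <;> omega
    · rw [if_neg (fun hc => hdisj x hc hx), if_neg (fun hc => hdisj x' hc hx')] at hd
      obtain ⟨c1, c2⟩ := hbU x hxy hx
      obtain ⟨c3, c4⟩ := hbU x' hx'y hx'
      have hne' : (U.filter (fun u => u ≤ x)).card ≠ (U.filter (fun u => u ≤ x')).card := by
        rcases lt_or_gt_of_ne hne with hlt | hgt
        · exact Nat.ne_of_lt (filter_card_lt hlt hx')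
        · exact (Nat.ne_of_lt (filter_card_lt hgt hx)).symm
      refine not_dvd_of_bounds hy0 ?_ ?_ ?_ hd <;> push_cast <;> omega

lemma mem_ZcF {n : ℕ} {D U : Finset ℕ} {a b : ℕ} :
    (a, b) ∈ ZcF n D U ↔
      (b ∈ U ∧ 1 ≤ a ∧ a ≤ min (b - 1) (n + 1 - b)) ∨
      (b ∈ D ∧ max (b + 1) (n + 3 - b) ≤ a ∧ a ≤ n + 1) := by
  simp only [ZcF, Finset.mem_union, Finset.mem_biUnion, Finset.mem_image, Finset.mem_Icc,
    Prod.mk.injEq]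
  constructor
  · rintro (⟨u, hu, i, hi, rfl, rfl⟩ | ⟨d, hd, i, hi, rfl, rfl⟩)
    · exact Or.inl ⟨hu, hi⟩
    · exact Or.inr ⟨hd, hi⟩
  · rintro (⟨hb, hi⟩ | ⟨hb, hi⟩)
    · exact Or.inl ⟨b, hb, a, hi, rfl, rfl⟩
    · exact Or.inr ⟨b, hb, a, hi, rfl, rfl⟩

lemma sum_Eunit_row_apply (i : ℕ) (T : Finset ℕ) (a b : ℕ) :
    (∑ j ∈ T, Eunit i j) a b = if a = i ∧ b ∈ T then 1 else 0 := by
  classical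
  rw [Finset.sum_apply, Finset.sum_apply]
  simp only [Eunit]
  by_cases ha : a = i
  · simp only [ha, true_and]
    rw [Finset.sum_ite_eq T b (fun _ => (1 : ℝ))]
  · simp [ha]

lemma sum_Eunit_col_apply (j : ℕ) (S : Finset ℕ) (a b : ℕ) :
    (∑ i ∈ S, Eunit i j) a b = if a ∈ S ∧ b = j then 1 else 0 := by
  classical
  rw [Finset.sum_apply, Finset.sum_apply]
  simp only [Eunit]
  by_cases hb : b = j
  · simp only [hb, and_true]
    rw [Finset.sum_ite_eq S a (fun _ => (1 : ℝ))]
  · simp [hb]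

lemma sum_Eunit_block_apply (S T : Finset ℕ) (a b : ℕ) :
    (∑ j ∈ T, ∑ i ∈ S, Eunit i j) a b = if a ∈ S ∧ b ∈ T then 1 else 0 := by
  classical
  rw [Finset.sum_apply, Finset.sum_apply]
  have h : ∀ j ∈ T, (∑ i ∈ S, Eunit i j) a b = if a ∈ S ∧ b = j then 1 else 0 :=
    fun j _ => sum_Eunit_col_apply j S a b
  rw [Finset.sum_congr rfl h]
  by_cases ha : a ∈ S
  · simp only [ha, true_and]
    rw [Finset.sum_ite_eq T b (fun _ => (1 : ℝ))]
  · simp [ha]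

def Tfin (n : ℕ) : Finset (ℕ × ℕ) :=
  (Finset.Icc 2 (n + 1) ×ˢ Finset.Icc 2 (n + 1)).filter
    fun q => 2 ≤ q.1 ∧ 2 * q.1 ≤ n + 1 ∧ 2 ≤ q.2 ∧ q.2 ≤ q.1

def Bfin (n : ℕ) : Finset (ℕ × ℕ) :=
  (Finset.Icc 2 (n + 1) ×ˢ Finset.Icc 2 (n + 1)).filter
    fun q => 2 ≤ q.1 ∧ 2 * q.1 ≤ n ∧ 2 ≤ q.2 ∧ q.2 ≤ q.1

lemma mem_Tfin {n : ℕ} {q : ℕ × ℕ} :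
    q ∈ Tfin n ↔ 2 ≤ q.1 ∧ 2 * q.1 ≤ n + 1 ∧ 2 ≤ q.2 ∧ q.2 ≤ q.1 := by
  simp only [Tfin, Finset.mem_filter, Finset.mem_product, Finset.mem_Icc]
  omega

lemma mem_Bfin {n : ℕ} {q : ℕ × ℕ} :
    q ∈ Bfin n ↔ 2 ≤ q.1 ∧ 2 * q.1 ≤ n ∧ 2 ≤ q.2 ∧ q.2 ≤ q.1 := by
  simp only [Bfin, Finset.mem_filter, Finset.mem_product, Finset.mem_Icc]
  omega

def fintypeT (n : ℕ) : Fintype {q : ℕ × ℕ // 2 ≤ q.1 ∧ 2 * q.1 ≤ n + 1 ∧ 2 ≤ q.2 ∧ q.2 ≤ q.1} :=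
  Fintype.subtype (Tfin n) (fun _ => mem_Tfin)

def fintypeB (n : ℕ) : Fintype {q : ℕ × ℕ // 2 ≤ q.1 ∧ 2 * q.1 ≤ n ∧ 2 ≤ q.2 ∧ q.2 ≤ q.1} :=
  Fintype.subtype (Bfin n) (fun _ => mem_Bfin)

/-- The coefficient matrices of the row and column relations, the zero relations, the top sum
relations and the bottom sum relations are pairwise distinct and linearly independent. -/
theorem statement9 (n : ℕ) (hn : 1 ≤ n) (D U : Finset ℕ)
    (hD : D ⊆ Finset.Icc 2 n) (hU : U = Finset.Icc 2 n \ D) :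
    Function.Injective (relMat n D U) ∧ LinearIndependent ℝ (relMat n D U) := by
  classical
  haveI := fintypeT n
  haveI := fintypeB n
  have hUsub : U ⊆ Finset.Icc 2 n := hU ▸ Finset.sdiff_subset
  have hdisjDU : ∀ j, j ∈ D → j ∉ U := fun j hjD hjU => by
    rw [hU] at hjU; exact (Finset.mem_sdiff.mp hjU).2 hjD
  have hdisjUD : ∀ j, j ∈ U → j ∉ D := fun j hjU hjD => hdisjDU j hjD hjU
  have hunionDU : ∀ j, 2 ≤ j → j ≤ n → j ∈ D ∨ j ∈ U := fun j h2 hn' => by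
    by_cases hj : j ∈ D
    · exact Or.inl hj
    · exact Or.inr (hU ▸ Finset.mem_sdiff.mpr ⟨Finset.mem_Icc.mpr ⟨h2, hn'⟩, hj⟩)
  have hunionUD : ∀ j, 2 ≤ j → j ≤ n → j ∈ U ∨ j ∈ D := fun j h2 hn' =>
    (hunionDU j h2 hn').symm
  suffices li : LinearIndependent ℝ (relMat n D U) by exact ⟨li.injective, li⟩
  rw [Fintype.linearIndependent_iff]
  intro g hg
  set R : ℕ → ℝ := fun i =>
    if h : i ∈ Finset.Icc 1 (n + 1) then g (Sum.inl ⟨i, h⟩) else 0 with hRdef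
  set C : ℕ → ℝ := fun j =>
    if h : j ∈ Finset.Icc 2 (n + 1) then g (Sum.inr (Sum.inl ⟨j, h⟩)) else 0 with hCdef
  set Z : ℕ × ℕ → ℝ := fun p =>
    if h : p ∈ ZcF n D U then g (Sum.inr (Sum.inr (Sum.inl ⟨p, h⟩))) else 0 with hZdef
  set T : ℕ × ℕ → ℝ := fun q =>
    if h : 2 ≤ q.1 ∧ 2 * q.1 ≤ n + 1 ∧ 2 ≤ q.2 ∧ q.2 ≤ q.1 then
      g (Sum.inr (Sum.inr (Sum.inr (Sum.inl ⟨q, h⟩)))) else 0 with hTdef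
  set B : ℕ × ℕ → ℝ := fun q =>
    if h : 2 ≤ q.1 ∧ 2 * q.1 ≤ n ∧ 2 ≤ q.2 ∧ q.2 ≤ q.1 then
      g (Sum.inr (Sum.inr (Sum.inr (Sum.inr ⟨q, h⟩)))) else 0 with hBdef
  have hF : ∀ a b : ℕ,
      (if a ∈ Finset.Icc 1 (n + 1) ∧ b ∈ Finset.Icc 1 (n + 1) then R a else 0)
      + (if a ∈ Finset.Icc 1 (n + 1) ∧ b ∈ Finset.Icc 2 (n + 1) then C b else 0)
      + (if (a, b) ∈ ZcF n D U then Z (a, b) else 0)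
      + (∑ q ∈ Tfin n, if a ∈ Finset.Icc 1 q.1 ∧
          b ∈ (Finset.Icc 1 (n + 1)).filter
            (fun j => nu n D U j ≡ nu n D U q.2 [ZMOD (q.1 : ℤ)]) then T q else 0)
      + (∑ q ∈ Bfin n, if a ∈ Finset.Icc (n + 2 - q.1) (n + 1) ∧
          b ∈ (Finset.Icc 1 (n + 1)).filter
            (fun j => nu n U D j ≡ nu n U D q.2 [ZMOD (q.1 : ℤ)]) then B q else 0) = 0 := by
    intro a b
    have h0 := congrFun (congrFun hg a) b
    simp only [Finset.sum_apply, Pi.smul_apply, smul_eq_mul, Pi.zero_apply] at h0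
    rw [Fintype.sum_sum_type, Fintype.sum_sum_type, Fintype.sum_sum_type,
      Fintype.sum_sum_type] at h0
    have e1 : (∑ k : {i : ℕ // i ∈ Finset.Icc 1 (n + 1)},
        g (Sum.inl k) * relMat n D U (Sum.inl k) a b)
        = (if a ∈ Finset.Icc 1 (n + 1) ∧ b ∈ Finset.Icc 1 (n + 1) then R a else 0) := by
      have h1 : ∀ k : {i : ℕ // i ∈ Finset.Icc 1 (n + 1)},
          g (Sum.inl k) * relMat n D U (Sum.inl k) a b
          = (if a = k.1 ∧ b ∈ Finset.Icc 1 (n + 1) then R k.1 else 0) := by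
        intro k
        have hr : relMat n D U (Sum.inl k) a b
            = if a = k.1 ∧ b ∈ Finset.Icc 1 (n + 1) then 1 else 0 := by
          have : relMat n D U (Sum.inl k) = ∑ j ∈ Finset.Icc 1 (n + 1), Eunit k.1 j := rfl
          rw [this, sum_Eunit_row_apply]
        have hg' : g (Sum.inl k) = R k.1 := by rw [hRdef]; simp [k.2]
        rw [hr, hg']
        split <;> simp
      rw [Finset.sum_congr rfl (fun k _ => h1 k),
        ← Finset.sum_subtype (Finset.Icc 1 (n + 1)) (fun _ => Iff.rfl)
          (fun i => if a = i ∧ b ∈ Finset.Icc 1 (n + 1) then R i else 0)]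
      by_cases hb : b ∈ Finset.Icc 1 (n + 1)
      · simp only [hb, and_true]
        rw [Finset.sum_ite_eq]
      · simp [hb]
    have e2 : (∑ k : {j : ℕ // j ∈ Finset.Icc 2 (n + 1)},
        g (Sum.inr (Sum.inl k)) * relMat n D U (Sum.inr (Sum.inl k)) a b)
        = (if a ∈ Finset.Icc 1 (n + 1) ∧ b ∈ Finset.Icc 2 (n + 1) then C b else 0) := by
      have h1 : ∀ k : {j : ℕ // j ∈ Finset.Icc 2 (n + 1)},
          g (Sum.inr (Sum.inl k)) * relMat n D U (Sum.inr (Sum.inl k)) a b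
          = (if a ∈ Finset.Icc 1 (n + 1) ∧ b = k.1 then C k.1 else 0) := by
        intro k
        have hr : relMat n D U (Sum.inr (Sum.inl k)) a b
            = if a ∈ Finset.Icc 1 (n + 1) ∧ b = k.1 then 1 else 0 := by
          have : relMat n D U (Sum.inr (Sum.inl k))
              = ∑ i ∈ Finset.Icc 1 (n + 1), Eunit i k.1 := rfl
          rw [this, sum_Eunit_col_apply]
        have hg' : g (Sum.inr (Sum.inl k)) = C k.1 := by rw [hCdef]; simp [k.2]
        rw [hr, hg']
        split <;> simp
      rw [Finset.sum_congr rfl (fun k _ => h1 k),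
        ← Finset.sum_subtype (Finset.Icc 2 (n + 1)) (fun _ => Iff.rfl)
          (fun j => if a ∈ Finset.Icc 1 (n + 1) ∧ b = j then C j else 0)]
      by_cases ha : a ∈ Finset.Icc 1 (n + 1)
      · simp only [ha, true_and]
        rw [Finset.sum_ite_eq]
      · simp [ha]
    have e3 : (∑ k : {p : ℕ × ℕ // p ∈ ZcF n D U},
        g (Sum.inr (Sum.inr (Sum.inl k))) * relMat n D U (Sum.inr (Sum.inr (Sum.inl k))) a b)
        = (if (a, b) ∈ ZcF n D U then Z (a, b) else 0) := by
      have h1 : ∀ k : {p : ℕ × ℕ // p ∈ ZcF n D U},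
          g (Sum.inr (Sum.inr (Sum.inl k))) * relMat n D U (Sum.inr (Sum.inr (Sum.inl k))) a b
          = (if (a, b) = k.1 then Z k.1 else 0) := by
        intro k
        have hr : relMat n D U (Sum.inr (Sum.inr (Sum.inl k))) a b
            = if (a, b) = k.1 then 1 else 0 := by
          have : relMat n D U (Sum.inr (Sum.inr (Sum.inl k))) = Eunit k.1.1 k.1.2 := rfl
          rw [this]
          simp only [Eunit, Prod.ext_iff]
        have hg' : g (Sum.inr (Sum.inr (Sum.inl k))) = Z k.1 := by rw [hZdef]; simp [k.2]
        rw [hr, hg']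
        split <;> simp
      rw [Finset.sum_congr rfl (fun k _ => h1 k),
        ← Finset.sum_subtype (ZcF n D U) (fun _ => Iff.rfl)
          (fun p => if (a, b) = p then Z p else 0)]
      rw [Finset.sum_ite_eq]
    have e4 : (∑ k : {q : ℕ × ℕ // 2 ≤ q.1 ∧ 2 * q.1 ≤ n + 1 ∧ 2 ≤ q.2 ∧ q.2 ≤ q.1},
        g (Sum.inr (Sum.inr (Sum.inr (Sum.inl k)))) *
          relMat n D U (Sum.inr (Sum.inr (Sum.inr (Sum.inl k)))) a b)
        = ∑ q ∈ Tfin n, if a ∈ Finset.Icc 1 q.1 ∧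
            b ∈ (Finset.Icc 1 (n + 1)).filter
              (fun j => nu n D U j ≡ nu n D U q.2 [ZMOD (q.1 : ℤ)]) then T q else 0 := by
      have h1 : ∀ k : {q : ℕ × ℕ // 2 ≤ q.1 ∧ 2 * q.1 ≤ n + 1 ∧ 2 ≤ q.2 ∧ q.2 ≤ q.1},
          g (Sum.inr (Sum.inr (Sum.inr (Sum.inl k)))) *
            relMat n D U (Sum.inr (Sum.inr (Sum.inr (Sum.inl k)))) a b
          = (if a ∈ Finset.Icc 1 k.1.1 ∧
              b ∈ (Finset.Icc 1 (n + 1)).filter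
                (fun j => nu n D U j ≡ nu n D U k.1.2 [ZMOD (k.1.1 : ℤ)]) then T k.1 else 0) := by
        intro k
        have hr : relMat n D U (Sum.inr (Sum.inr (Sum.inr (Sum.inl k)))) a b
            = if a ∈ Finset.Icc 1 k.1.1 ∧
                b ∈ (Finset.Icc 1 (n + 1)).filter
                  (fun j => nu n D U j ≡ nu n D U k.1.2 [ZMOD (k.1.1 : ℤ)]) then 1 else 0 := by
          have : relMat n D U (Sum.inr (Sum.inr (Sum.inr (Sum.inl k))))
              = ∑ j ∈ (Finset.Icc 1 (n + 1)).filter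
                  (fun j => nu n D U j ≡ nu n D U k.1.2 [ZMOD (k.1.1 : ℤ)]),
                ∑ i ∈ Finset.Icc 1 k.1.1, Eunit i j := rfl
          rw [this, sum_Eunit_block_apply]
        have hg' : g (Sum.inr (Sum.inr (Sum.inr (Sum.inl k)))) = T k.1 := by
          rw [hTdef]; simp [k.2]
        rw [hr, hg']
        split <;> simp
      rw [Finset.sum_congr rfl (fun k _ => h1 k),
        ← Finset.sum_subtype (Tfin n) (fun _ => mem_Tfin)
          (fun q => if a ∈ Finset.Icc 1 q.1 ∧
            b ∈ (Finset.Icc 1 (n + 1)).filter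
              (fun j => nu n D U j ≡ nu n D U q.2 [ZMOD (q.1 : ℤ)]) then T q else 0)]
    have e5 : (∑ k : {q : ℕ × ℕ // 2 ≤ q.1 ∧ 2 * q.1 ≤ n ∧ 2 ≤ q.2 ∧ q.2 ≤ q.1},
        g (Sum.inr (Sum.inr (Sum.inr (Sum.inr k)))) *
          relMat n D U (Sum.inr (Sum.inr (Sum.inr (Sum.inr k)))) a b)
        = ∑ q ∈ Bfin n, if a ∈ Finset.Icc (n + 2 - q.1) (n + 1) ∧
            b ∈ (Finset.Icc 1 (n + 1)).filter
              (fun j => nu n U D j ≡ nu n U D q.2 [ZMOD (q.1 : ℤ)]) then B q else 0 := by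
      have h1 : ∀ k : {q : ℕ × ℕ // 2 ≤ q.1 ∧ 2 * q.1 ≤ n ∧ 2 ≤ q.2 ∧ q.2 ≤ q.1},
          g (Sum.inr (Sum.inr (Sum.inr (Sum.inr k)))) *
            relMat n D U (Sum.inr (Sum.inr (Sum.inr (Sum.inr k)))) a b
          = (if a ∈ Finset.Icc (n + 2 - k.1.1) (n + 1) ∧
              b ∈ (Finset.Icc 1 (n + 1)).filter
                (fun j => nu n U D j ≡ nu n U D k.1.2 [ZMOD (k.1.1 : ℤ)]) then B k.1 else 0) := by
        intro k
        have hr : relMat n D U (Sum.inr (Sum.inr (Sum.inr (Sum.inr k)))) a b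
            = if a ∈ Finset.Icc (n + 2 - k.1.1) (n + 1) ∧
                b ∈ (Finset.Icc 1 (n + 1)).filter
                  (fun j => nu n U D j ≡ nu n U D k.1.2 [ZMOD (k.1.1 : ℤ)]) then 1 else 0 := by
          have : relMat n D U (Sum.inr (Sum.inr (Sum.inr (Sum.inr k))))
              = ∑ j ∈ (Finset.Icc 1 (n + 1)).filter
                  (fun j => nu n U D j ≡ nu n U D k.1.2 [ZMOD (k.1.1 : ℤ)]),
                ∑ i ∈ Finset.Icc (n + 2 - k.1.1) (n + 1), Eunit i j := rfl
          rw [this, sum_Eunit_block_apply]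
        have hg' : g (Sum.inr (Sum.inr (Sum.inr (Sum.inr k)))) = B k.1 := by
          rw [hBdef]; simp [k.2]
        rw [hr, hg']
        split <;> simp
      rw [Finset.sum_congr rfl (fun k _ => h1 k),
        ← Finset.sum_subtype (Bfin n) (fun _ => mem_Bfin)
          (fun q => if a ∈ Finset.Icc (n + 2 - q.1) (n + 1) ∧
            b ∈ (Finset.Icc 1 (n + 1)).filter
              (fun j => nu n U D j ≡ nu n U D q.2 [ZMOD (q.1 : ℤ)]) then B q else 0)]
    rw [e1, e2, e3, e4, e5] at h0
    linarith
  -- Step 1: row coefficients vanish (evaluate in column 1)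
  have hR0 : ∀ i, R i = 0 := by
    intro i
    by_cases hi : i ∈ Finset.Icc 1 (n + 1)
    swap
    · rw [hRdef]; simp [hi]
    have h0 := hF i 1
    rw [if_pos ⟨hi, Finset.mem_Icc.mpr (by omega)⟩] at h0
    rw [if_neg (fun hc => by have := Finset.mem_Icc.mp hc.2; omega)] at h0
    rw [if_neg (fun hc => by
      rcases mem_ZcF.mp hc with ⟨hb, _⟩ | ⟨hb, _⟩
      · have := Finset.mem_Icc.mp (hUsub hb); omega
      · have := Finset.mem_Icc.mp (hD hb); omega)] at h0
    rw [Finset.sum_eq_zero (fun q hq => by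
      obtain ⟨h1, h2, h3, h4⟩ := mem_Tfin.mp hq
      rw [if_neg]
      rintro ⟨-, hbf⟩
      obtain ⟨-, hcong⟩ := Finset.mem_filter.mp hbf
      rw [nu_one] at hcong
      exact nu_not_modEq n D U hD hUsub hdisjDU hunionDU h1 h2 h3 h4 le_rfl (by omega)
        (by omega) (by simpa [nu_one] using hcong.symm))] at h0
    rw [Finset.sum_eq_zero (fun q hq => by
      obtain ⟨h1, h2, h3, h4⟩ := mem_Bfin.mp hq
      rw [if_neg]
      rintro ⟨-, hbf⟩
      obtain ⟨-, hcong⟩ := Finset.mem_filter.mp hbf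
      exact nu_not_modEq n U D hUsub hD hdisjUD hunionUD h1 (by omega) h3 h4 le_rfl (by omega)
        (by omega) (by simpa [nu_one] using hcong.symm))] at h0
    linarith
  -- Step 2: column coefficients vanish (evaluate in the middle row (n+3)/2)
  have hC0 : ∀ j, C j = 0 := by
    intro j
    by_cases hj : j ∈ Finset.Icc 2 (n + 1)
    swap
    · rw [hCdef]; simp [hj]
    have h0 := hF ((n + 3) / 2) j
    simp only [hR0, ite_self] at h0
    rw [if_pos ⟨Finset.mem_Icc.mpr (by omega), hj⟩] at h0
    rw [if_neg (fun hc => by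
      rcases mem_ZcF.mp hc with ⟨hb, hi1, hi2⟩ | ⟨hb, hi1, hi2⟩
      · have := Finset.mem_Icc.mp (hUsub hb); omega
      · have := Finset.mem_Icc.mp (hD hb); omega)] at h0
    rw [Finset.sum_eq_zero (fun q hq => by
      obtain ⟨h1, h2, h3, h4⟩ := mem_Tfin.mp hq
      rw [if_neg]
      rintro ⟨hmem, -⟩
      have := Finset.mem_Icc.mp hmem
      omega)] at h0
    rw [Finset.sum_eq_zero (fun q hq => by
      obtain ⟨h1, h2, h3, h4⟩ := mem_Bfin.mp hq
      rw [if_neg]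
      rintro ⟨hmem, -⟩
      have := Finset.mem_Icc.mp hmem
      omega)] at h0
    linarith
  -- Step 3: top sum coefficients vanish (downward induction on y, evaluate at (y, x))
  have hTaux : ∀ k : ℕ, ∀ q : ℕ × ℕ,
      (2 ≤ q.1 ∧ 2 * q.1 ≤ n + 1 ∧ 2 ≤ q.2 ∧ q.2 ≤ q.1) → (n + 1) / 2 - q.1 < k →
      T q = 0 := by
    intro k
    induction k with
    | zero => intro q hq hk; omega
    | succ k ih =>
      rintro ⟨y, x⟩ ⟨hy2, hyn, hx2, hxy⟩ hk
      have h0 := hF y x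
      simp only [hR0, hC0, ite_self] at h0
      rw [if_neg (fun hc => by
        rcases mem_ZcF.mp hc with ⟨hb, hi1, hi2⟩ | ⟨hb, hi1, hi2⟩ <;> omega)] at h0
      rw [Finset.sum_eq_single_of_mem (y, x)
        (mem_Tfin.mpr ⟨hy2, hyn, hx2, hxy⟩)
        (fun q' hq' hne => by
          obtain ⟨h1, h2, h3, h4⟩ := mem_Tfin.mp hq'
          rcases lt_trichotomy q'.1 y with hlt | heq | hgt
          · rw [if_neg]
            rintro ⟨hmem, -⟩
            have := Finset.mem_Icc.mp hmem
            omega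
          · rw [if_neg]
            rintro ⟨-, hbf⟩
            obtain ⟨-, hcong⟩ := Finset.mem_filter.mp hbf
            have hxne : x ≠ q'.2 := by
              intro hc
              exact hne (Prod.ext heq hc.symm)
            exact nu_not_modEq n D U hD hUsub hdisjDU hunionDU hy2 hyn hx2 hxy
              (by omega) (by omega) hxne (heq ▸ hcong)
          · have hz : T q' = 0 := ih q' ⟨h1, h2, h3, h4⟩ (by omega)
            rw [hz, ite_self])] at h0
      rw [Finset.sum_eq_zero (fun q' hq' => by
        obtain ⟨h1, h2, h3, h4⟩ := mem_Bfin.mp hq'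
        rw [if_neg]
        rintro ⟨hmem, -⟩
        have := Finset.mem_Icc.mp hmem
        omega)] at h0
      rw [if_pos ⟨Finset.mem_Icc.mpr (by omega),
        Finset.mem_filter.mpr ⟨Finset.mem_Icc.mpr (by omega), Int.ModEq.refl _⟩⟩] at h0
      linarith
  have hT0 : ∀ q, T q = 0 := by
    intro q
    by_cases hq : 2 ≤ q.1 ∧ 2 * q.1 ≤ n + 1 ∧ 2 ≤ q.2 ∧ q.2 ≤ q.1
    · exact hTaux ((n + 1) / 2 + 1) q hq (by omega)
    · rw [hTdef]; simp [hq]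
  -- Step 4: bottom sum coefficients vanish (downward induction, evaluate at (n+2-y, x))
  have hBaux : ∀ k : ℕ, ∀ q : ℕ × ℕ,
      (2 ≤ q.1 ∧ 2 * q.1 ≤ n ∧ 2 ≤ q.2 ∧ q.2 ≤ q.1) → n / 2 - q.1 < k →
      B q = 0 := by
    intro k
    induction k with
    | zero => intro q hq hk; omega
    | succ k ih =>
      rintro ⟨y, x⟩ ⟨hy2, hyn, hx2, hxy⟩ hk
      have h0 := hF (n + 2 - y) x
      simp only [hR0, hC0, ite_self] at h0
      rw [if_neg (fun hc => by
        rcases mem_ZcF.mp hc with ⟨hb, hi1, hi2⟩ | ⟨hb, hi1, hi2⟩ <;> omega)] at h0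
      rw [Finset.sum_eq_zero (fun q' hq' => by
        obtain ⟨h1, h2, h3, h4⟩ := mem_Tfin.mp hq'
        rw [if_neg]
        rintro ⟨hmem, -⟩
        have := Finset.mem_Icc.mp hmem
        omega)] at h0
      rw [Finset.sum_eq_single_of_mem (y, x)
        (mem_Bfin.mpr ⟨hy2, hyn, hx2, hxy⟩)
        (fun q' hq' hne => by
          obtain ⟨h1, h2, h3, h4⟩ := mem_Bfin.mp hq'
          rcases lt_trichotomy q'.1 y with hlt | heq | hgt
          · rw [if_neg]
            rintro ⟨hmem, -⟩
            have := Finset.mem_Icc.mp hmem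
            omega
          · rw [if_neg]
            rintro ⟨-, hbf⟩
            obtain ⟨-, hcong⟩ := Finset.mem_filter.mp hbf
            have hxne : x ≠ q'.2 := by
              intro hc
              exact hne (Prod.ext heq hc.symm)
            exact nu_not_modEq n U D hUsub hD hdisjUD hunionUD hy2 (by omega) hx2 hxy
              (by omega) (by omega) hxne (heq ▸ hcong)
          · have hz : B q' = 0 := ih q' ⟨h1, h2, h3, h4⟩ (by omega)
            rw [hz, ite_self])] at h0
      rw [if_pos ⟨Finset.mem_Icc.mpr (by omega),
        Finset.mem_filter.mpr ⟨Finset.mem_Icc.mpr (by omega), Int.ModEq.refl _⟩⟩] at h0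
      linarith
  have hB0 : ∀ q, B q = 0 := by
    intro q
    by_cases hq : 2 ≤ q.1 ∧ 2 * q.1 ≤ n ∧ 2 ≤ q.2 ∧ q.2 ≤ q.1
    · exact hBaux (n / 2 + 1) q hq (by omega)
    · rw [hBdef]; simp [hq]
  -- Step 5: zero relation coefficients vanish
  have hZ0 : ∀ p, Z p = 0 := by
    rintro ⟨a, b⟩
    by_cases hp : (a, b) ∈ ZcF n D U
    swap
    · rw [hZdef]; simp [hp]
    have h0 := hF a b
    simp only [hR0, hC0, ite_self] at h0
    rw [if_pos hp] at h0
    rw [Finset.sum_eq_zero (fun q hq => by rw [hT0 q, ite_self])] at h0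
    rw [Finset.sum_eq_zero (fun q hq => by rw [hB0 q, ite_self])] at h0
    linarith
  -- Conclude
  intro k
  rcases k with ⟨i, hi⟩ | ⟨j, hj⟩ | ⟨p, hp⟩ | ⟨q, hq⟩ | ⟨q, hq⟩
  · have := hR0 i
    rw [hRdef] at this
    simpa [hi] using this
  · have := hC0 j
    rw [hCdef] at this
    simpa [hj] using this
  · have := hZ0 p
    rw [hZdef] at this
    simpa [hp] using this
  · have := hT0 q
    rw [hTdef] at this
    simpa [hq] using this
  · have := hB0 q
    rw [hBdef] at this
    simpa [hq] using this
end

section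
/- The affine span Aff(c) of the permutation matrices of the c-singletons has dimension at most n(n+1)/2; that is, the linear direction of the affine subspace Aff(c) of the space of (n+1)×(n+1) real matrices has ℝ-dimension at most binomial(n+1, 2). -/
namespace Stmt10

open Finset

variable (n : ℕ) (D U : Finset ℕ)

/-- the box of relevant indices -/
def sbox : Finset ℕ := Finset.Icc 1 (n+1)

noncomputable def rab (a b : ℕ) : ℕ :=
  (if a ∈ D then 1 else a) + (D.filter (fun m => a < m ∧ m < b)).card +
    (if b ∈ U then n + 1 - b else 0)

noncomputable def Mmat (a b : ℕ) : ℕ → ℕ → ℝ := fun i j =>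
  (if i = rab n D U a b ∧ j = b then (1:ℝ) else 0)
  - (if i = rab n D U a b ∧ j = a then (1:ℝ) else 0)
  + ((if i = rab n D U a b + 1 ∧ j = a then (1:ℝ) else 0)
  - (if i = rab n D U a b + 1 ∧ j = b then (1:ℝ) else 0))

open scoped Classical in
noncomputable def genF : Finset (ℕ → ℕ → ℝ) :=
  ((sbox n ×ˢ sbox n).filter (fun p => p.1 < p.2)).image (fun p => Mmat n D U p.1 p.2)

noncomputable def Wspan : Submodule ℝ (ℕ → ℕ → ℝ) := Submodule.span ℝ (genF n D U)

def GoodP (w : Equiv.Perm ℕ) : Prop :=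
  (∀ m ∈ D, ∀ u ∈ sbox n, ∀ v ∈ sbox n, u < m → m < v →
      ¬(w.symm v < w.symm m ∧ w.symm u < w.symm m)) ∧
  (∀ m ∈ U, ∀ u ∈ sbox n, ∀ v ∈ sbox n, u < m → m < v →
      ¬(w.symm m < w.symm u ∧ w.symm m < w.symm v))

noncomputable def invs (w : Equiv.Perm ℕ) : Finset (ℕ × ℕ) :=
  ((sbox n ×ˢ sbox n)).filter (fun p => p.1 < p.2 ∧ w.symm p.2 < w.symm p.1)

lemma apply_mem_sbox {w : Equiv.Perm ℕ} (hfix : ∀ x ∉ sbox n, w x = x) {x : ℕ}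
    (hx : x ∈ sbox n) : w x ∈ sbox n := by
  by_contra h
  have h2 : w (w x) = w x := hfix _ h
  have h3 : w x = x := w.injective h2
  rw [h3] at h
  exact h hx

lemma symm_mem_sbox {w : Equiv.Perm ℕ} (hfix : ∀ x ∉ sbox n, w x = x) {x : ℕ}
    (hx : x ∈ sbox n) : w.symm x ∈ sbox n := by
  by_contra h
  have h2 : w (w.symm x) = w.symm x := hfix _ h
  rw [Equiv.apply_symm_apply] at h2
  rw [← h2] at h
  exact h hx

lemma swaplt (r px py : ℕ) (h1 : ¬(px = r+1 ∧ py = r)) (h2 : ¬(px = r ∧ py = r+1)) :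
    ((if px = r then r+1 else if px = r+1 then r else px)
      < (if py = r then r+1 else if py = r+1 then r else py)) ↔ px < py := by
  split_ifs <;> omega

lemma good_of_singleton {w : Equiv.Perm ℕ} (hD : D ⊆ Finset.Icc 2 n)
    (hU : U ⊆ Finset.Icc 2 n)
    (hfix : ∀ x ∉ sbox n, w x = x) (hs : IsCSingleton n D U ⇑w) : GoodP n D U w := by
  have hsb : ∀ {x : ℕ}, x ∈ sbox n → w.symm x ∈ sbox n := fun hx => symm_mem_sbox n hfix hx
  constructor
  · intro m hm u hu v hv hum hmv ⟨h1, h2⟩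
    have hmbox : m ∈ sbox n := by
      have := hD hm; simp only [sbox, Finset.mem_Icc] at *; omega
    have hqu := hsb hu; have hqv := hsb hv; have hqm := hsb hmbox
    simp only [sbox, Finset.mem_Icc] at hqu hqv hqm
    have huv : w.symm u ≠ w.symm v := fun h => by
      have := w.symm.injective h; omega
    have hwu : w (w.symm u) = u := w.apply_symm_apply u
    have hwv : w (w.symm v) = v := w.apply_symm_apply v
    have hwm : w (w.symm m) = m := w.apply_symm_apply m
    rcases lt_or_gt_of_ne huv with h | h
    · exact (hs (w.symm u) (w.symm v) (w.symm m) (by omega) h h1 (by omega)).2.2.1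
        ⟨by rw [hwu, hwm]; exact hum, by rw [hwm, hwv]; exact hmv, by rw [hwm]; exact hm⟩
    · exact (hs (w.symm v) (w.symm u) (w.symm m) (by omega) h h2 (by omega)).1
        ⟨by rw [hwu, hwm]; exact hum, by rw [hwm, hwv]; exact hmv, by rw [hwm]; exact hm⟩
  · intro m hm u hu v hv hum hmv ⟨h1, h2⟩
    have hmbox : m ∈ sbox n := by
      have := hU hm; simp only [sbox, Finset.mem_Icc] at *; omega
    have hqu := hsb hu; have hqv := hsb hv; have hqm := hsb hmbox
    simp only [sbox, Finset.mem_Icc] at hqu hqv hqm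
    have huv : w.symm u ≠ w.symm v := fun h => by
      have := w.symm.injective h; omega
    have hwu : w (w.symm u) = u := w.apply_symm_apply u
    have hwv : w (w.symm v) = v := w.apply_symm_apply v
    have hwm : w (w.symm m) = m := w.apply_symm_apply m
    rcases lt_or_gt_of_ne huv with h | h
    · exact (hs (w.symm m) (w.symm u) (w.symm v) (by omega) h1 h (by omega)).2.2.2
        ⟨by rw [hwu, hwm]; exact hum, by rw [hwm, hwv]; exact hmv, by rw [hwm]; exact hm⟩
    · exact (hs (w.symm m) (w.symm v) (w.symm u) (by omega) h2 h (by omega)).2.1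
        ⟨by rw [hwu, hwm]; exact hum, by rw [hwm, hwv]; exact hmv, by rw [hwm]; exact hm⟩

section Step
open Finset
variable {n : ℕ} {D U : Finset ℕ}

set_option maxHeartbeats 1000000 in
lemma step {w : Equiv.Perm ℕ} (hD : D ⊆ Finset.Icc 2 n) (hU : U = Finset.Icc 2 n \ D)
    (hfix : ∀ x ∉ sbox n, w x = x) (hg : GoodP n D U w)
    (hdesc : ∃ r ∈ Finset.Icc 1 n, w (r+1) < w r) :
    ∃ w' : Equiv.Perm ℕ, (∀ x ∉ sbox n, w' x = x) ∧ GoodP n D U w' ∧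
      (invs n w').card < (invs n w).card ∧
      permMatrix ⇑w - permMatrix ⇑w' ∈ Wspan n D U := by
  classical
  have hUD : ∀ x, x ∈ U → x ∉ D := by
    intro x hx; rw [hU] at hx; exact (Finset.mem_sdiff.1 hx).2
  have hcov : ∀ x, 2 ≤ x → x ≤ n → x ∉ D → x ∈ U := by
    intro x h2 h3 h4; rw [hU]; exact Finset.mem_sdiff.2 ⟨Finset.mem_Icc.2 ⟨h2, h3⟩, h4⟩
  -- the set of "good" descents
  set P : ℕ → Prop := fun s => 1 ≤ s ∧ s ≤ n ∧ w (s+1) < w s ∧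
      (w s ∈ D → ∀ p, 1 ≤ p → p < s → w p < w s) with hP
  haveI : DecidablePred P := Classical.decPred P
  have hPne : ∃ s, P s := by
    obtain ⟨r₀, hr₀, hlt₀⟩ := hdesc
    rw [Finset.mem_Icc] at hr₀
    set Q : ℕ → Prop := fun s => 1 ≤ s ∧ s ≤ n ∧ w (s+1) < w s with hQ
    haveI : DecidablePred Q := Classical.decPred Q
    have hQex : ∃ s, Q s := ⟨r₀, hr₀.1, hr₀.2, hlt₀⟩
    set m := Nat.find hQex with hm
    have hQm : Q m := Nat.find_spec hQex
    have hmin : ∀ s, s < m → ¬ Q s := fun s hs => Nat.find_min hQex hs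
    obtain ⟨hm1, hmn, hmdes⟩ := hQm
    have hstep : ∀ s, 1 ≤ s → s < m → w s < w (s+1) := by
      intro s h1 h2
      have hns : ¬ Q s := hmin s h2
      simp only [hQ, not_and] at hns
      have hne : w (s+1) ≠ w s := fun h => by
        have := w.injective h; omega
      have := hns h1 (by omega)
      omega
    have hchain : ∀ d, ∀ p, 1 ≤ p → p + d + 1 ≤ m → w p < w (p + d + 1) := by
      intro d
      induction d with
      | zero => intro p h1 h2; exact hstep p h1 (by omega)
      | succ d ih =>
        intro p h1 h2
        have h3 := ih p h1 (by omega)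
        have h4 := hstep (p + d + 1) (by omega) (by omega)
        have h5 : p + d + 1 + 1 = p + (d + 1) + 1 := by omega
        rw [h5] at h4
        omega
    refine ⟨m, hm1, hmn, hmdes, ?_⟩
    intro _ p hp1 hpm
    have h6 := hchain (m - p - 1) p hp1 (by omega)
    rw [show p + (m - p - 1) + 1 = m from by omega] at h6
    exact h6
  obtain ⟨s₀, hs₀⟩ := hPne
  set r : ℕ := Nat.findGreatest P n with hrdef
  have hrP : P r := Nat.findGreatest_spec (m := s₀) hs₀.2.1 hs₀
  have hrmax : ∀ s, P s → s ≤ r := fun s hs => Nat.le_findGreatest hs.2.1 hs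
  obtain ⟨hr1, hrn, hdes, hbcond⟩ := hrP
  set a : ℕ := w (r+1) with ha
  set b : ℕ := w r with hb
  have hab : a < b := hdes
  have hrbox : r ∈ sbox n := by simp [sbox, Finset.mem_Icc]; omega
  have hr1box : r + 1 ∈ sbox n := by simp [sbox, Finset.mem_Icc]; omega
  have habox : a ∈ sbox n := apply_mem_sbox n hfix hr1box
  have hbbox : b ∈ sbox n := apply_mem_sbox n hfix hrbox
  have hqa : w.symm a = r + 1 := w.symm_apply_apply (r+1)
  have hqb : w.symm b = r := w.symm_apply_apply r
  have hxa : ∀ x, w.symm x = r + 1 ↔ x = a := by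
    intro x; rw [Equiv.symm_apply_eq]
  have hxb : ∀ x, w.symm x = r ↔ x = b := by
    intro x; rw [Equiv.symm_apply_eq]
  have ha1 : 1 ≤ a := (Finset.mem_Icc.1 habox).1
  have hbn1 : b ≤ n + 1 := (Finset.mem_Icc.1 hbbox).2
  -- b-condition in value form
  have hbc' : b ∈ D → ∀ v, b < v → v ∈ sbox n → r < w.symm v := by
    intro hbD v hbv hv
    have hqv := symm_mem_sbox n hfix hv
    simp only [sbox, Finset.mem_Icc] at hqv
    by_contra hcon
    push_neg at hcon
    have hne : w.symm v ≠ r := by simp only [ne_eq, hxb]; omega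
    have := hbcond hbD (w.symm v) hqv.1 (by omega)
    rw [w.apply_symm_apply] at this
    omega
  -- claim M
  have claimM : a ∈ U → ∀ u, u < a → u ∈ sbox n → w.symm u < w.symm a := by
    intro haU u hua hubox
    have hqu := symm_mem_sbox n hfix hubox
    simp only [sbox, Finset.mem_Icc] at hqu
    rcases lt_trichotomy (w.symm u) (w.symm a) with h | h | h
    · exact h
    · exact absurd (w.symm.injective h) (by omega)
    · exfalso
      rw [hqa] at h
      have h2 : r + 2 ≤ n + 1 := by omega
      set c := w (r+2) with hc
      have hqc : w.symm c = r + 2 := w.symm_apply_apply (r+2)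
      have hcbox : c ∈ sbox n := apply_mem_sbox n hfix (by simp [sbox, Finset.mem_Icc]; omega)
      have hca : c ≠ a := by
        intro hh; rw [hh] at hqc; omega
      rcases lt_or_gt_of_ne hca with hlt | hgt
      · have hmem : P (r+1) := by
          refine ⟨by omega, by omega, ?_, ?_⟩
          · show w (r+1+1) < w (r+1); exact hlt
          · intro hDa; exact absurd hDa (hUD _ haU)
        have := hrmax _ hmem
        omega
      · exact hg.2 a haU u hubox c hcbox hua hgt ⟨by omega, by omega⟩
  -- claim P1D
  have hP1D : a ∈ D → ∀ u, u < a → u ∈ sbox n → w.symm a < w.symm u := by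
    intro haD u hua hubox
    have hqu := symm_mem_sbox n hfix hubox
    simp only [sbox, Finset.mem_Icc] at hqu
    have := hg.1 a haD u hubox b hbbox hua hab
    rcases lt_trichotomy (w.symm u) (w.symm a) with h | h | h
    · exact absurd ⟨by omega, h⟩ this
    · exact absurd (w.symm.injective h) (by omega)
    · exact h
  -- claim P2a
  have hP2a : ∀ m, a < m → m < b → m ∈ D → w.symm m < r := by
    intro m ham hmb hmD
    have hma : m ≠ a := by omega
    have hmbne : m ≠ b := by omega
    have hq1 : w.symm m ≠ r := by simp only [ne_eq, hxb]; exact hmbne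
    have hq2 : w.symm m ≠ r + 1 := by simp only [ne_eq, hxa]; exact hma
    have := hg.1 m hmD a habox b hbbox ham hmb
    rw [hqa, hqb] at this
    by_contra hcon
    exact this ⟨by omega, by omega⟩
  -- claim P2b
  have hP2b : ∀ m, a < m → m < b → m ∈ U → r + 1 < w.symm m := by
    intro m ham hmb hmU
    have hma : m ≠ a := by omega
    have hmbne : m ≠ b := by omega
    have hq1 : w.symm m ≠ r := by simp only [ne_eq, hxb]; exact hmbne
    have hq2 : w.symm m ≠ r + 1 := by simp only [ne_eq, hxa]; exact hma
    have := hg.2 m hmU a habox b hbbox ham hmb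
    rw [hqa, hqb] at this
    by_contra hcon
    exact this ⟨by omega, by omega⟩
  -- claim P3U
  have hP3U : b ∈ U → ∀ v, b < v → v ∈ sbox n → w.symm v < r := by
    intro hbU v hbv hv
    have hvb : v ≠ b := by omega
    have hq1 : w.symm v ≠ r := by simp only [ne_eq, hxb]; exact hvb
    have := hg.2 b hbU a habox v hv hab hbv
    rw [hqa, hqb] at this
    by_contra hcon
    exact this ⟨by omega, by omega⟩
  -- the counting argument : rab = r
  have hr_eq : rab n D U a b = r := by
    have hcard1 : ((sbox n).filter (fun x => w.symm x < w.symm a)).card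
        = (Finset.Ico 1 (r+1)).card := by
      apply Finset.card_bij (fun x _ => w.symm x)
      · intro x hx
        rw [Finset.mem_filter] at hx
        have h2 := symm_mem_sbox n hfix hx.1
        simp only [sbox, Finset.mem_Icc] at h2
        have h3 := hx.2
        rw [hqa] at h3
        rw [Finset.mem_Ico]
        omega
      · intro x hx y hy h
        exact w.symm.injective h
      · intro p hp
        rw [Finset.mem_Ico] at hp
        refine ⟨w p, ?_, w.symm_apply_apply p⟩
        rw [Finset.mem_filter]
        constructor
        · exact apply_mem_sbox n hfix (by simp only [sbox, Finset.mem_Icc]; omega)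
        · rw [w.symm_apply_apply, hqa]; omega
    have hfeq : (sbox n).filter (fun x => w.symm x < w.symm a)
        = (sbox n).filter (fun x => (x < a ∧ a ∉ D) ∨ ((a < x ∧ x < b ∧ x ∈ D) ∨ (x = b ∨ (b < x ∧ b ∈ U)))) := by
      apply Finset.filter_congr
      intro x hx
      simp only [sbox, Finset.mem_Icc] at hx
      rw [hqa]
      constructor
      · intro hlt
        rcases lt_trichotomy x a with h | h | h
        · left
          refine ⟨h, fun haD => ?_⟩
          have := hP1D haD x h (by simp only [sbox, Finset.mem_Icc]; omega)
          rw [hqa] at this; omega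
        · exfalso
          rw [h, hqa] at hlt; omega
        · right
          rcases lt_trichotomy x b with h2 | h2 | h2
          · left
            refine ⟨h, h2, ?_⟩
            by_contra hxD
            have hxU : x ∈ U := hcov x (by omega) (by omega) hxD
            have := hP2b x h h2 hxU; omega
          · right; left; exact h2
          · right; right
            refine ⟨h2, ?_⟩
            by_contra hbU
            have hbD : b ∈ D := by
              by_contra hbD
              exact hbU (hcov b (by omega) (by omega) hbD)
            have := hbc' hbD x h2 (by simp only [sbox, Finset.mem_Icc]; omega)
            omega
      · intro hP
        rcases hP with ⟨h1, h2⟩ | ⟨h1, h2, h3⟩ | h1 | ⟨h1, h2⟩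
        · have haU : a ∈ U := hcov a (by omega) (by omega) h2
          have := claimM haU x h1 (by simp only [sbox, Finset.mem_Icc]; omega)
          rw [hqa] at this; exact this
        · have := hP2a x h1 h2 h3; omega
        · rw [h1, hqb]; omega
        · have := hP3U h2 x h1 (by simp only [sbox, Finset.mem_Icc]; omega); omega
    have hd1 : ((sbox n).filter (fun x => x < a ∧ a ∉ D)).card = if a ∈ D then 0 else a - 1 := by
      by_cases haD : a ∈ D
      · rw [if_pos haD, Finset.card_eq_zero, Finset.filter_eq_empty_iff]
        intro x _
        simp [haD]
      · rw [if_neg haD]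
        have he : (sbox n).filter (fun x => x < a ∧ a ∉ D) = Finset.Ico 1 a := by
          ext x
          simp only [Finset.mem_filter, sbox, Finset.mem_Icc, Finset.mem_Ico, haD,
            not_false_iff, and_true]
          omega
        rw [he, Nat.card_Ico]
    have hd2 : ((sbox n).filter (fun x => a < x ∧ x < b ∧ x ∈ D)).card
        = (D.filter (fun m => a < m ∧ m < b)).card := by
      congr 1
      ext x
      simp only [Finset.mem_filter, sbox, Finset.mem_Icc]
      constructor
      · rintro ⟨_, h1, h2, h3⟩; exact ⟨h3, h1, h2⟩
      · rintro ⟨h3, h1, h2⟩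
        have := hD h3
        rw [Finset.mem_Icc] at this
        exact ⟨⟨by omega, by omega⟩, h1, h2, h3⟩
    have hd3 : ((sbox n).filter (fun x => x = b)).card = 1 := by
      have he : (sbox n).filter (fun x => x = b) = {b} := by
        ext x
        simp only [Finset.mem_filter, sbox, Finset.mem_Icc, Finset.mem_singleton]
        constructor
        · rintro ⟨_, h⟩; exact h
        · rintro rfl; exact ⟨⟨by omega, by omega⟩, rfl⟩
      rw [he, Finset.card_singleton]
    have hd4 : ((sbox n).filter (fun x => b < x ∧ b ∈ U)).card
        = if b ∈ U then n + 1 - b else 0 := by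
      by_cases hbU : b ∈ U
      · rw [if_pos hbU]
        have he : (sbox n).filter (fun x => b < x ∧ b ∈ U) = Finset.Icc (b+1) (n+1) := by
          ext x
          simp only [Finset.mem_filter, sbox, Finset.mem_Icc, hbU, and_true]
          omega
        rw [he, Nat.card_Icc]; omega
      · rw [if_neg hbU, Finset.card_eq_zero, Finset.filter_eq_empty_iff]
        intro x _
        simp [hbU]
    rw [hfeq, Finset.filter_or, Finset.filter_or, Finset.filter_or] at hcard1
    have hdis1 : Disjoint ((sbox n).filter (fun x => x < a ∧ a ∉ D))
        (((sbox n).filter (fun x => a < x ∧ x < b ∧ x ∈ D)) ∪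
          (((sbox n).filter (fun x => x = b)) ∪ ((sbox n).filter (fun x => b < x ∧ b ∈ U)))) := by
      rw [Finset.disjoint_left]
      intro x h1 h2
      rw [Finset.mem_filter] at h1
      rw [Finset.mem_union, Finset.mem_union, Finset.mem_filter, Finset.mem_filter,
        Finset.mem_filter] at h2
      rcases h2 with ⟨_, h2⟩ | ⟨_, h2⟩ | ⟨_, h2⟩ <;> omega
    have hdis2 : Disjoint ((sbox n).filter (fun x => a < x ∧ x < b ∧ x ∈ D))
        ((((sbox n).filter (fun x => x = b)) ∪ ((sbox n).filter (fun x => b < x ∧ b ∈ U)))) := by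
      rw [Finset.disjoint_left]
      intro x h1 h2
      rw [Finset.mem_filter] at h1
      rw [Finset.mem_union, Finset.mem_filter, Finset.mem_filter] at h2
      rcases h2 with ⟨_, h2⟩ | ⟨_, h2⟩ <;> omega
    have hdis3 : Disjoint ((sbox n).filter (fun x => x = b))
        ((sbox n).filter (fun x => b < x ∧ b ∈ U)) := by
      rw [Finset.disjoint_left]
      intro x h1 h2
      rw [Finset.mem_filter] at h1 h2
      omega
    rw [Finset.card_union_of_disjoint hdis1, Finset.card_union_of_disjoint hdis2,
      Finset.card_union_of_disjoint hdis3, hd1, hd2, hd3, hd4, Nat.card_Ico] at hcard1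
    simp only [rab]
    by_cases haD : a ∈ D <;> by_cases hbU : b ∈ U <;>
      simp only [haD, hbU, if_true, if_false] at hcard1 ⊢ <;> omega
  -- the swapped permutation
  set w' : Equiv.Perm ℕ := w * Equiv.swap r (r+1) with hw'
  have hw'app : ∀ x, w' x = w (Equiv.swap r (r+1) x) := fun x => rfl
  have hq' : ∀ x, w'.symm x = Equiv.swap r (r+1) (w.symm x) := by
    intro x
    rw [Equiv.symm_apply_eq, hw'app, Equiv.swap_apply_self, Equiv.apply_symm_apply]
  have hswap : ∀ p : ℕ, Equiv.swap r (r+1) p = if p = r then r+1 else if p = r+1 then r else p := by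
    intro p; rw [Equiv.swap_apply_def]
  have hq'a : w'.symm a = r := by rw [hq' a, hqa, hswap]; simp
  have hq'b : w'.symm b = r + 1 := by rw [hq' b, hqb, hswap]; simp
  -- comparison transfer
  have hcmp : ∀ x y, ¬(x = a ∧ y = b) → ¬(x = b ∧ y = a) →
      (w'.symm x < w'.symm y ↔ w.symm x < w.symm y) := by
    intro x y h1 h2
    rw [hq' x, hq' y, hswap, hswap]
    apply swaplt
    · rw [hxa, hxb]; exact h1
    · rw [hxb, hxa]; exact h2
  have hfix' : ∀ x ∉ sbox n, w' x = x := by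
    intro x hx
    have hx1 : x ≠ r := fun h => hx (h ▸ hrbox)
    have hx2 : x ≠ r + 1 := fun h => hx (h ▸ hr1box)
    rw [hw'app, Equiv.swap_apply_of_ne_of_ne hx1 hx2]
    exact hfix x hx
  have hq'other : ∀ x, x ≠ a → x ≠ b → w'.symm x = w.symm x := by
    intro x h1 h2
    rw [hq' x, hswap, if_neg, if_neg]
    · simp only [hxa]; exact h1
    · simp only [hxb]; exact h2
  have hg' : GoodP n D U w' := by
    constructor
    · intro m hm u hubox v hvbox hum hmv ⟨h1, h2⟩
      by_cases hc1 : u = a ∧ m = b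
      · obtain ⟨hu1, hm1⟩ := hc1
        have hvb : v ≠ b := by omega
        have hva : v ≠ a := by omega
        rw [hm1, hq'b] at h1
        rw [hq'other v hva hvb] at h1
        have hbD : b ∈ D := hm1 ▸ hm
        have hqvr : w.symm v ≠ r := by simp only [ne_eq, hxb]; exact hvb
        have := hbc' hbD v (by omega) hvbox
        omega
      · by_cases hc2 : v = b ∧ m = a
        · obtain ⟨hv1, hm1⟩ := hc2
          rw [hv1, hm1, hq'b, hq'a] at h1
          omega
        · have h1' : w.symm v < w.symm m :=
            (hcmp v m (fun ⟨e1, e2⟩ => by omega) hc2).1 h1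
          have h2' : w.symm u < w.symm m :=
            (hcmp u m hc1 (fun ⟨e1, e2⟩ => by omega)).1 h2
          exact hg.1 m hm u hubox v hvbox hum hmv ⟨h1', h2'⟩
    · intro m hm u hubox v hvbox hum hmv ⟨h1, h2⟩
      by_cases hc2 : v = b ∧ m = a
      · obtain ⟨hv1, hm1⟩ := hc2
        have hua' : u ≠ a := by omega
        have hub : u ≠ b := by omega
        rw [hm1, hq'a] at h1
        rw [hq'other u hua' hub] at h1
        have haU : a ∈ U := hm1 ▸ hm
        have h3 := claimM haU u (by omega) hubox
        rw [hqa] at h3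
        have hqur : w.symm u ≠ r := by simp only [ne_eq, hxb]; exact hub
        omega
      · by_cases hc1 : m = b ∧ u = a
        · obtain ⟨hm1, hu1⟩ := hc1
          rw [hm1, hu1, hq'a, hq'b] at h1
          omega
        · have h1' : w.symm m < w.symm u :=
            (hcmp m u (fun ⟨e1, e2⟩ => by omega) hc1).1 h1
          have h2' : w.symm m < w.symm v :=
            (hcmp m v (fun ⟨e1, e2⟩ => hc2 ⟨e2, e1⟩) (fun ⟨e1, e2⟩ => by omega)).1 h2
          exact hg.2 m hm u hubox v hvbox hum hmv ⟨h1', h2'⟩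
  have hinv : (invs n w').card < (invs n w).card := by
    apply Finset.card_lt_card
    have hsub : invs n w' ⊆ invs n w := by
      intro p hp
      rw [invs, Finset.mem_filter] at hp ⊢
      obtain ⟨hpb, hplt, hpinv⟩ := hp
      refine ⟨hpb, hplt, ?_⟩
      by_cases hpab : p.1 = a ∧ p.2 = b
      · exfalso
        rw [hpab.1, hpab.2, hq'b, hq'a] at hpinv
        omega
      · exact (hcmp p.2 p.1 (fun ⟨e1, e2⟩ => by omega)
          (fun ⟨e1, e2⟩ => hpab ⟨e2, e1⟩)).1 hpinv
    have hmem : (a, b) ∈ invs n w := by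
      rw [invs, Finset.mem_filter, Finset.mem_product]
      refine ⟨⟨habox, hbbox⟩, hab, ?_⟩
      show w.symm b < w.symm a
      rw [hqa, hqb]; omega
    have hnot : (a, b) ∉ invs n w' := by
      rw [invs, Finset.mem_filter]
      rintro ⟨-, -, hlt⟩
      have hlt2 : w'.symm b < w'.symm a := hlt
      rw [hq'b, hq'a] at hlt2
      omega
    rw [Finset.ssubset_iff_of_subset hsub]
    exact ⟨(a, b), hmem, hnot⟩
  have hmd : permMatrix ⇑w - permMatrix ⇑w' ∈ Wspan n D U := by
    have hMmem : Mmat n D U a b ∈ Wspan n D U := by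
      apply Submodule.subset_span
      exact Finset.mem_coe.2 (Finset.mem_image.2 ⟨(a, b),
        Finset.mem_filter.2 ⟨Finset.mem_product.2 ⟨habox, hbbox⟩, hab⟩, rfl⟩)
    have hdiff : permMatrix ⇑w - permMatrix ⇑w' = Mmat n D U a b := by
      funext i j
      have e0 : w r = b := rfl
      have e1 : w' r = a := by
        rw [hw'app, hswap]; simp; rfl
      have e2 : w' (r+1) = b := by
        rw [hw'app, hswap]
        simp only [if_neg (by omega : ¬ r + 1 = r), if_pos rfl]
        exact e0
      simp only [Pi.sub_apply, permMatrix, Mmat, hr_eq]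
      by_cases hi : i = r
      · subst hi
        rw [e0, e1]
        have hrr : ¬ (r = r + 1) := by omega
        split_ifs <;> first | (exfalso; omega) | norm_num
      · by_cases hi2 : i = r + 1
        · subst hi2
          rw [e2]
          have e3 : w (r+1) = a := rfl
          rw [e3]
          split_ifs <;> first | (exfalso; omega) | norm_num
        · have e4 : w' i = w i := by
            rw [hw'app, hswap, if_neg hi, if_neg hi2]
          rw [e4]
          split_ifs <;> first | (exfalso; omega) | norm_num
    rw [hdiff]
    exact hMmem
  exact ⟨w', hfix', hg', hinv, hmd⟩

end Step

section Rest
open Finset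

lemma nodesc_eq {n : ℕ} {w : Equiv.Perm ℕ} (hfix : ∀ x ∉ sbox n, w x = x)
    (hnd : ¬ ∃ r ∈ Finset.Icc 1 n, w (r+1) < w r) : ∀ x, w x = x := by
  push_neg at hnd
  have hmono : ∀ r, 1 ≤ r → r ≤ n → w r < w (r+1) := by
    intro r h1 h2
    have h3 := hnd r (Finset.mem_Icc.2 ⟨h1, h2⟩)
    have h4 : w r ≠ w (r+1) := fun h => by have := w.injective h; omega
    omega
  have hup : ∀ k, 1 ≤ k → k ≤ n + 1 → k ≤ w k := by
    intro k
    induction k with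
    | zero => omega
    | succ k ih =>
      intro h1 h2
      by_cases hk : k = 0
      · subst hk
        have := apply_mem_sbox n hfix (show 1 ∈ sbox n by
          simp only [sbox, Finset.mem_Icc]; omega)
        simp only [sbox, Finset.mem_Icc] at this
        simpa using this.1
      · have h3 := ih (by omega) (by omega)
        have h4 := hmono k (by omega) (by omega)
        omega
  have hdown : ∀ d k, k + d = n + 1 → 1 ≤ k → w k ≤ k := by
    intro d
    induction d with
    | zero =>
      intro k hk h1
      have := apply_mem_sbox n hfix (show k ∈ sbox n by
        simp only [sbox, Finset.mem_Icc]; omega)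
      simp only [sbox, Finset.mem_Icc] at this
      omega
    | succ d ih =>
      intro k hk h1
      have h2 := ih (k+1) (by omega) (by omega)
      have h3 := hmono k h1 (by omega)
      omega
  intro x
  by_cases hx : x ∈ sbox n
  · have hx2 := hx
    simp only [sbox, Finset.mem_Icc] at hx2
    have h1 := hup x hx2.1 hx2.2
    have h2 := hdown (n + 1 - x) x (by omega) hx2.1
    omega
  · exact hfix x hx

lemma key_nodesc {n : ℕ} (D U : Finset ℕ) {w : Equiv.Perm ℕ}
    (hfix : ∀ x ∉ sbox n, w x = x)
    (hnd : ¬ ∃ r ∈ Finset.Icc 1 n, w (r+1) < w r) :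
    permMatrix ⇑w - permMatrix _root_.id ∈ Wspan n D U := by
  have hid : permMatrix ⇑w = permMatrix _root_.id := by
    funext i j
    simp only [permMatrix, nodesc_eq hfix hnd i, id]
  rw [hid, sub_self]
  exact (Wspan n D U).zero_mem

lemma key {n : ℕ} {D U : Finset ℕ} (hD : D ⊆ Finset.Icc 2 n) (hU : U = Finset.Icc 2 n \ D) :
    ∀ k (w : Equiv.Perm ℕ), (∀ x ∉ sbox n, w x = x) → GoodP n D U w → (invs n w).card ≤ k →
      permMatrix ⇑w - permMatrix _root_.id ∈ Wspan n D U := by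
  intro k
  induction k with
  | zero =>
    intro w hfix hg hc
    apply key_nodesc D U hfix
    rintro ⟨r, hr, hlt⟩
    rw [Finset.mem_Icc] at hr
    have hmem : (w (r+1), w r) ∈ invs n w := by
      rw [invs, Finset.mem_filter, Finset.mem_product]
      refine ⟨⟨apply_mem_sbox n hfix (by simp only [sbox, Finset.mem_Icc]; omega),
        apply_mem_sbox n hfix (by simp only [sbox, Finset.mem_Icc]; omega)⟩, hlt, ?_⟩
      show w.symm (w r) < w.symm (w (r+1))
      rw [w.symm_apply_apply, w.symm_apply_apply]
      omega
    have := Finset.card_pos.2 ⟨_, hmem⟩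
    omega
  | succ k ih =>
    intro w hfix hg hc
    by_cases hd : ∃ r ∈ Finset.Icc 1 n, w (r+1) < w r
    · obtain ⟨w', hfix', hg', hcard', hmd⟩ := step hD hU hfix hg hd
      have h2 := ih w' hfix' hg' (by omega)
      have h3 : permMatrix ⇑w - permMatrix _root_.id
          = (permMatrix ⇑w - permMatrix ⇑w') + (permMatrix ⇑w' - permMatrix _root_.id) := by
        abel
      rw [h3]
      exact Submodule.add_mem _ hmd h2
    · exact key_nodesc D U hfix hd

lemma genF_card {n : ℕ} (D U : Finset ℕ) : (genF n D U).card ≤ (n+1).choose 2 := by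
  classical
  refine le_trans Finset.card_image_le ?_
  have h1 : ((sbox n ×ˢ sbox n).filter (fun p => p.1 < p.2)).card
      = ((sbox n).sigma (fun b => Finset.Ico 1 b)).card := by
    apply Finset.card_bij (fun p _ => (⟨p.2, p.1⟩ : (_ : ℕ) × ℕ))
    · intro p hp
      rw [Finset.mem_filter, Finset.mem_product] at hp
      obtain ⟨⟨ha, hb⟩, h3⟩ := hp
      rw [Finset.mem_sigma, Finset.mem_Ico]
      simp only [sbox, Finset.mem_Icc] at ha hb ⊢
      exact ⟨hb, by omega⟩
    · intro p hp q hq h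
      simp only [Sigma.mk.inj_iff, heq_eq_eq] at h
      exact Prod.ext h.2 h.1
    · rintro ⟨b, a⟩ hb
      simp only [Finset.mem_sigma, Finset.mem_Ico, sbox, Finset.mem_Icc] at hb
      refine ⟨(a, b), ?_, rfl⟩
      rw [Finset.mem_filter, Finset.mem_product]
      refine ⟨⟨?_, ?_⟩, ?_⟩
      · show a ∈ sbox n
        simp only [sbox, Finset.mem_Icc]; omega
      · show b ∈ sbox n
        simp only [sbox, Finset.mem_Icc]; omega
      · show a < b
        omega
  rw [h1, Finset.card_sigma]
  have h2 : ∀ b ∈ sbox n, (Finset.Ico 1 b).card = b - 1 := fun b _ => Nat.card_Ico 1 b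
  rw [Finset.sum_congr rfl h2]
  have h3 : ∑ b ∈ sbox n, (b - 1) = ∑ b ∈ Finset.range (n+2), (b - 1) := by
    apply Finset.sum_subset
    · intro x hx
      simp only [sbox, Finset.mem_Icc] at hx
      rw [Finset.mem_range]
      omega
    · intro x hx hx2
      simp only [sbox, Finset.mem_Icc] at hx2
      rw [Finset.mem_range] at hx
      omega
  rw [h3, Finset.sum_range_succ' (fun b => b - 1) (n+1)]
  simp only [Nat.add_sub_cancel]
  have h4 : (∑ i ∈ Finset.range (n+1), i) * 2 = (n+1) * n := by
    simpa using Finset.sum_range_id_mul_two (n+1)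
  have h5 : (n+1).choose 2 = (n+1) * n / 2 := by
    rw [Nat.choose_two_right]
    simp
  omega

end Rest
end Stmt10

/-- The affine span `Aff(c)` of the permutation matrices of the c-singletons has dimension at
most `binomial(n+1, 2)`: the dimension of its direction is at most `(n+1).choose 2`. -/
theorem statement10 (n : ℕ) (hn : 1 ≤ n) (D U : Finset ℕ)
    (hD : D ⊆ Finset.Icc 2 n) (hU : U = Finset.Icc 2 n \ D) :
    Module.rank ℝ (affineSpan ℝ (cSingletonMatrices n D U)).direction
      ≤ ((n + 1).choose 2 : Cardinal) := by
  classical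
  have hUsub : U ⊆ Finset.Icc 2 n := by rw [hU]; exact Finset.sdiff_subset
  rw [direction_affineSpan]
  have hle : vectorSpan ℝ (cSingletonMatrices n D U) ≤ Stmt10.Wspan n D U := by
    rw [vectorSpan_def]
    apply Submodule.span_le.2
    rintro z hz
    rw [Set.mem_vsub] at hz
    obtain ⟨x, hx, y, hy, hz⟩ := hz
    obtain ⟨w₁, hfix₁, hs₁, rfl⟩ := hx
    obtain ⟨w₂, hfix₂, hs₂, rfl⟩ := hy
    have h1 := Stmt10.key hD hU ((Stmt10.invs n w₁).card) w₁ hfix₁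
      (Stmt10.good_of_singleton n D U hD hUsub hfix₁ hs₁) le_rfl
    have h2 := Stmt10.key hD hU ((Stmt10.invs n w₂).card) w₂ hfix₂
      (Stmt10.good_of_singleton n D U hD hUsub hfix₂ hs₂) le_rfl
    rw [← hz, vsub_eq_sub]
    have h3 : permMatrix ⇑w₁ - permMatrix ⇑w₂
        = (permMatrix ⇑w₁ - permMatrix _root_.id) - (permMatrix ⇑w₂ - permMatrix _root_.id) := by
      abel
    rw [h3]
    exact Submodule.sub_mem _ h1 h2
  calc Module.rank ℝ (vectorSpan ℝ (cSingletonMatrices n D U))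
      ≤ Module.rank ℝ (Stmt10.Wspan n D U) := Submodule.rank_mono hle
    _ ≤ (Stmt10.genF n D U).card := rank_span_finset_le _
    _ ≤ ((n + 1).choose 2 : Cardinal) := by
        exact_mod_cast Nat.cast_le.2 (Stmt10.genF_card D U)
end

section
/- Let w be a permutation of {1,...,n+1} that avoids the patterns 132 and 312. Then for every y ∈ {1,...,n+1} and every integer z there is exactly one index i ∈ {1,...,y} with w(i) ≡ z (mod y). Consequently, for every point X in the affine span over ℝ of the permutation matrices of the 132- and 312-avoiding permutations of {1,...,n+1}, every y ∈ {1,...,n+1} and every integer z, one has ∑_j ∑_{i=1}^{y} X(i,j) = 1, where the outer sum ranges over all j ∈ {1,...,n+1} with j ≡ z (mod y). -/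
/-- `w` avoids the pattern 132 (on positions `1,…,n+1`). -/
def Avoids132 (n : ℕ) (w : ℕ → ℕ) : Prop :=
  ∀ i j k : ℕ, 1 ≤ i → i < j → j < k → k ≤ n + 1 → ¬(w i < w k ∧ w k < w j)

/-- `w` avoids the pattern 312 (on positions `1,…,n+1`). -/
def Avoids312 (n : ℕ) (w : ℕ → ℕ) : Prop :=
  ∀ i j k : ℕ, 1 ≤ i → i < j → j < k → k ≤ n + 1 → ¬(w j < w k ∧ w k < w i)

lemma maps_to_aux (n : ℕ) (w : Equiv.Perm ℕ)
    (hfix : ∀ x ∉ Finset.Icc 1 (n + 1), w x = x) :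
    ∀ i ∈ Finset.Icc 1 (n + 1), w i ∈ Finset.Icc 1 (n + 1) := by
  intro i hi
  by_contra h
  have h1 : w (w i) = w i := hfix _ h
  have h2 : w i = i := w.injective h1
  rw [h2] at h
  exact h hi

lemma key_unique (n : ℕ) (w : Equiv.Perm ℕ)
    (hfix : ∀ x ∉ Finset.Icc 1 (n + 1), w x = x)
    (h132 : Avoids132 n ⇑w) (h312 : Avoids312 n ⇑w)
    (y : ℕ) (hy : y ∈ Finset.Icc 1 (n + 1)) (z : ℤ) :
    ∃! i : ℕ, i ∈ Finset.Icc 1 y ∧ (w i : ℤ) ≡ z [ZMOD (y : ℤ)] := by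
  simp only [Finset.mem_Icc] at hy
  obtain ⟨hy1, hy2⟩ := hy
  have hmaps := maps_to_aux n w hfix
  set S := (Finset.Icc 1 y).image w with hS
  have hsub : S ⊆ Finset.Icc 1 (n + 1) := by
    intro v hv
    obtain ⟨i, hi, rfl⟩ := Finset.mem_image.mp hv
    refine hmaps i ?_
    simp only [Finset.mem_Icc] at hi ⊢
    omega
  have hcard : S.card = y := by
    rw [hS, Finset.card_image_of_injective _ w.injective, Nat.card_Icc]
    omega
  -- no gaps
  have nogap : ∀ u v t : ℕ, u ∈ S → t ∈ S → u ≤ v → v ≤ t → v ∈ S := by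
    intro u v t hu ht huv hvt
    by_contra hv
    obtain ⟨i, hi, hwi⟩ := Finset.mem_image.mp hu
    obtain ⟨j, hj, hwj⟩ := Finset.mem_image.mp ht
    simp only [Finset.mem_Icc] at hi hj
    have huI := hsub hu
    have htI := hsub ht
    simp only [Finset.mem_Icc] at huI htI
    have huv' : u < v := lt_of_le_of_ne huv (by rintro rfl; exact hv hu)
    have hvt' : v < t := lt_of_le_of_ne hvt (by rintro rfl; exact hv ht)
    have hvI : v ∈ Finset.Icc 1 (n + 1) := by
      simp only [Finset.mem_Icc]; omega
    set k := w.symm v with hk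
    have hwk : w k = v := w.apply_symm_apply v
    have hkI : k ∈ Finset.Icc 1 (n + 1) := by
      by_contra h
      have h1 : w k = k := hfix _ h
      rw [h1] at hwk
      rw [hwk] at h
      exact h hvI
    simp only [Finset.mem_Icc] at hkI
    have hky : y < k := by
      by_contra h
      push_neg at h
      exact hv (Finset.mem_image.mpr ⟨k, Finset.mem_Icc.mpr ⟨hkI.1, h⟩, hwk⟩)
    have hij : i ≠ j := by
      rintro rfl
      rw [hwi] at hwj
      omega
    rcases lt_or_gt_of_ne hij with h | h
    · exact h132 i j k hi.1 h (by omega) (by omega)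
        ⟨by rw [hwi, hwk]; exact huv', by rw [hwk, hwj]; exact hvt'⟩
    · exact h312 j i k hj.1 h (by omega) (by omega)
        ⟨by rw [hwi, hwk]; exact huv', by rw [hwk, hwj]; exact hvt'⟩
  -- two distinct members of the image cannot be congruent mod y
  have key : ∀ i1 ∈ Finset.Icc 1 y, ∀ i2 ∈ Finset.Icc 1 y,
      w i1 < w i2 → ¬ ((w i1 : ℤ) ≡ (w i2 : ℤ) [ZMOD (y : ℤ)]) := by
    intro i1 h1 i2 h2 hlt hmod
    have hdvd : (y : ℤ) ∣ (w i2 : ℤ) - (w i1 : ℤ) := hmod.dvd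
    have hle : (y : ℤ) ≤ (w i2 : ℤ) - (w i1 : ℤ) := by
      refine Int.le_of_dvd ?_ hdvd
      omega
    have hsubset : Finset.Icc (w i1) (w i2) ⊆ S := by
      intro v hv
      simp only [Finset.mem_Icc] at hv
      exact nogap (w i1) v (w i2) (Finset.mem_image_of_mem _ h1)
        (Finset.mem_image_of_mem _ h2) hv.1 hv.2
    have hcard2 := Finset.card_le_card hsubset
    rw [Nat.card_Icc, hcard] at hcard2
    omega
  have injOn : ∀ i1 ∈ Finset.Icc 1 y, ∀ i2 ∈ Finset.Icc 1 y,
      ((w i1 : ℤ) ≡ (w i2 : ℤ) [ZMOD (y : ℤ)]) → i1 = i2 := by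
    intro i1 h1 i2 h2 hmod
    by_contra hne
    have : w i1 ≠ w i2 := fun h => hne (w.injective h)
    rcases lt_or_gt_of_ne this with h | h
    · exact key i1 h1 i2 h2 h hmod
    · exact key i2 h2 i1 h1 h hmod.symm
  -- existence via counting in ZMod y
  haveI : NeZero y := ⟨by omega⟩
  set T := (Finset.Icc 1 y).image (fun i => (((w i : ℤ)) : ZMod y)) with hT
  have hinj : Set.InjOn (fun i => (((w i : ℤ)) : ZMod y)) (Finset.Icc 1 y) := by
    intro i1 h1 i2 h2 hmod
    exact injOn i1 (Finset.mem_coe.mp h1) i2 (Finset.mem_coe.mp h2)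
      ((ZMod.intCast_eq_intCast_iff _ _ _).mp hmod)
  have hTcard : T.card = y := by
    rw [hT, Finset.card_image_of_injOn hinj, Nat.card_Icc]
    omega
  have hTuniv : T = Finset.univ := by
    apply Finset.eq_univ_of_card
    rw [hTcard, ZMod.card]
  have hz : ((z : ZMod y)) ∈ T := by rw [hTuniv]; exact Finset.mem_univ _
  obtain ⟨i, hi, hwi⟩ := Finset.mem_image.mp hz
  refine ⟨i, ⟨hi, (ZMod.intCast_eq_intCast_iff _ _ _).mp hwi⟩, ?_⟩
  rintro i' ⟨hi', hmod'⟩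
  exact injOn i' hi' i hi (hmod'.trans ((ZMod.intCast_eq_intCast_iff _ _ _).mp hwi).symm)

/-- If `w` is a permutation of `{1,…,n+1}` avoiding 132 and 312, then for every
`y ∈ {1,…,n+1}` and every integer `z` there is exactly one index `i ∈ {1,…,y}` with
`w(i) ≡ z (mod y)`; consequently, for every point `X` of the affine span of the permutation
matrices of the 132- and 312-avoiding permutations, `∑_{j ≡ z (mod y)} ∑_{i=1}^{y} X(i,j) = 1`. -/
theorem statement11 (n : ℕ) (hn : 1 ≤ n) :
    (∀ w : Equiv.Perm ℕ, (∀ x ∉ Finset.Icc 1 (n + 1), w x = x) →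
      Avoids132 n ⇑w → Avoids312 n ⇑w →
      ∀ y ∈ Finset.Icc 1 (n + 1), ∀ z : ℤ,
        ∃! i : ℕ, i ∈ Finset.Icc 1 y ∧ (w i : ℤ) ≡ z [ZMOD (y : ℤ)]) ∧
    (∀ X : ℕ → ℕ → ℝ,
      X ∈ affineSpan ℝ {Y : ℕ → ℕ → ℝ | ∃ w : Equiv.Perm ℕ,
            (∀ x ∉ Finset.Icc 1 (n + 1), w x = x) ∧ Avoids132 n ⇑w ∧ Avoids312 n ⇑w ∧
            Y = permMatrix ⇑w} →
      ∀ y ∈ Finset.Icc 1 (n + 1), ∀ z : ℤ,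
        ∑ j ∈ (Finset.Icc 1 (n + 1)).filter (fun j : ℕ => (j : ℤ) ≡ z [ZMOD (y : ℤ)]),
          ∑ i ∈ Finset.Icc 1 y, X i j = 1) := by
  constructor
  · intro w hfix h132 h312 y hy z
    exact key_unique n w hfix h132 h312 y hy z
  · intro X hX y hy z
    refine affineSpan_induction (p := fun Z : ℕ → ℕ → ℝ =>
      ∑ j ∈ (Finset.Icc 1 (n + 1)).filter (fun j : ℕ => (j : ℤ) ≡ z [ZMOD (y : ℤ)]),
        ∑ i ∈ Finset.Icc 1 y, Z i j = 1) hX ?_ ?_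
    · intro Y hY
      obtain ⟨w, hfix, h132, h312, rfl⟩ := hY
      -- compute the sum for a permutation matrix
      rw [Finset.sum_comm]
      have hyy := hy
      simp only [Finset.mem_Icc] at hyy
      have step : ∀ i ∈ Finset.Icc 1 y,
          (∑ j ∈ (Finset.Icc 1 (n + 1)).filter (fun j : ℕ => (j : ℤ) ≡ z [ZMOD (y : ℤ)]),
            permMatrix ⇑w i j)
          = if (w i : ℤ) ≡ z [ZMOD (y : ℤ)] then (1 : ℝ) else 0 := by
        intro i hi
        simp only [Finset.mem_Icc] at hi
        have hwi : w i ∈ Finset.Icc 1 (n + 1) :=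
          maps_to_aux n w hfix i (Finset.mem_Icc.mpr ⟨hi.1, by omega⟩)
        rw [show (∑ j ∈ (Finset.Icc 1 (n + 1)).filter
              (fun j : ℕ => (j : ℤ) ≡ z [ZMOD (y : ℤ)]), permMatrix ⇑w i j)
            = if w i ∈ (Finset.Icc 1 (n + 1)).filter
                (fun j : ℕ => (j : ℤ) ≡ z [ZMOD (y : ℤ)]) then (1 : ℝ) else 0 from
          Finset.sum_ite_eq _ _ _]
        simp [Finset.mem_filter, hwi]
      rw [Finset.sum_congr rfl step]
      obtain ⟨i0, ⟨hi0, hmod0⟩, huniq⟩ := key_unique n w hfix h132 h312 y hy z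
      have hfilter : (Finset.Icc 1 y).filter (fun i => (w i : ℤ) ≡ z [ZMOD (y : ℤ)]) = {i0} := by
        apply Finset.eq_singleton_iff_unique_mem.mpr
        refine ⟨Finset.mem_filter.mpr ⟨hi0, hmod0⟩, ?_⟩
        intro x hx
        simp only [Finset.mem_filter] at hx
        exact huniq x hx
      rw [← Finset.sum_filter, hfilter, Finset.sum_singleton]
    · intro c u v t hu hv ht
      simp only [vsub_eq_sub, vadd_eq_add, Pi.add_apply, Pi.smul_apply, Pi.sub_apply,
        smul_eq_mul] at *
      rw [show (∑ j ∈ (Finset.Icc 1 (n + 1)).filter (fun j : ℕ => (j : ℤ) ≡ z [ZMOD (y : ℤ)]),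
          ∑ i ∈ Finset.Icc 1 y, (c * (u i j - v i j) + t i j))
          = c * ((∑ j ∈ (Finset.Icc 1 (n + 1)).filter (fun j : ℕ => (j : ℤ) ≡ z [ZMOD (y : ℤ)]),
              ∑ i ∈ Finset.Icc 1 y, u i j)
            - (∑ j ∈ (Finset.Icc 1 (n + 1)).filter (fun j : ℕ => (j : ℤ) ≡ z [ZMOD (y : ℤ)]),
              ∑ i ∈ Finset.Icc 1 y, v i j))
            + (∑ j ∈ (Finset.Icc 1 (n + 1)).filter (fun j : ℕ => (j : ℤ) ≡ z [ZMOD (y : ℤ)]),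
              ∑ i ∈ Finset.Icc 1 y, t i j) from by
        simp only [Finset.sum_add_distrib, Finset.sum_sub_distrib, Finset.mul_sum, mul_sub]]
      rw [hu, hv, ht]
      ring
end
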